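/- arXiv:nlin/0108049 — 9 statements merged into one kernel-verified Lean document; each statement's English description precedes it below -/
import Mathlib

section
/- Let d ≥ 1 and let n_0, …, n_d be positive integers. For 1 ≤ k ≤ d let F_k be a complex n_{k−1} × n_k matrix, and for 0 ≤ k ≤ d let G_k be a complex n_d × n_k matrix. Let T be the square matrix of size n_0 + … + n_d whose block decomposition (with square diagonal blocks of sizes n_0, …, n_d) has F_k in block position (k−1, k) for 1 ≤ k ≤ d, G_k in block position (d, k) for 0 ≤ k ≤ d, and all other blocks zero. Then det(1 − T) = det(1_{n_d} − D), where D := G_d + Σ_{k=0}^{d−1} G_k · F_{k+1} · F_{k+2} ⋯ F_d. -/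
open Matrix BigOperators

/-- The product `F k * F (k+1) * ⋯ * F (k+m-1)`, an `n k × n (k+m)` matrix. -/
noncomputable def Fprod (n : ℕ → ℕ) (F : ∀ k : ℕ, Matrix (Fin (n k)) (Fin (n (k + 1))) ℂ) :
    (k m : ℕ) → Matrix (Fin (n k)) (Fin (n (k + m))) ℂ
  | k, 0 => show Matrix (Fin (n k)) (Fin (n k)) ℂ from 1
  | k, m + 1 =>
      F k * (Fprod n F (k + 1) m).submatrix id
        (Fin.cast (congrArg n (by omega : k + (m + 1) = (k + 1) + m)))
  termination_by k m => m

/-- The block matrix `T` with blocks `F_k` in position `(k-1,k)` (here indexed as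
`F k` in position `(k, k+1)` for `0 ≤ k ≤ d-1`), `G_k` in position `(d,k)`, and zeros elsewhere. -/
noncomputable def Tmat (d : ℕ) (n : ℕ → ℕ)
    (F : ∀ k : ℕ, Matrix (Fin (n k)) (Fin (n (k + 1))) ℂ)
    (G : ∀ k : ℕ, Matrix (Fin (n d)) (Fin (n k)) ℂ) :
    Matrix ((k : Fin (d + 1)) × Fin (n k)) ((k : Fin (d + 1)) × Fin (n k)) ℂ :=
  Matrix.of fun p q =>
    if hp : (p.1 : ℕ) = d then G (q.1 : ℕ) (Fin.cast (congrArg n hp) p.2) q.2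
    else if hq : (q.1 : ℕ) = (p.1 : ℕ) + 1 then
      F (p.1 : ℕ) p.2 (Fin.cast (congrArg n hq) q.2)
    else 0

/-- `D := G d + ∑_{k=0}^{d-1} G k · F (k+1) ⋯ F d` (with the `0`-based indexing
`F' k = F_{k+1}`, so the product is `F' k · F' (k+1) ⋯ F' (d-1)`). -/
noncomputable def Dmat (d : ℕ) (n : ℕ → ℕ)
    (F : ∀ k : ℕ, Matrix (Fin (n k)) (Fin (n (k + 1))) ℂ)
    (G : ∀ k : ℕ, Matrix (Fin (n d)) (Fin (n k)) ℂ) :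
    Matrix (Fin (n d)) (Fin (n d)) ℂ :=
  G d + ∑ k : Fin d,
    G (k : ℕ) * (Fprod n F (k : ℕ) (d - (k : ℕ))).submatrix id
      (Fin.cast (congrArg n (Nat.add_sub_cancel' (Nat.le_of_lt k.isLt)).symm))

section Aux

variable (d : ℕ) (n : ℕ → ℕ)
  (F : ∀ k : ℕ, Matrix (Fin (n k)) (Fin (n (k + 1))) ℂ)
  (G : ∀ k : ℕ, Matrix (Fin (n d)) (Fin (n k)) ℂ)

/-- Entry of `Fprod` in the degenerate case `m = 0`. -/
theorem Fprod_diag_apply (k m : ℕ) (hm : m = 0) (i : Fin (n k)) {M : ℕ}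
    (h : n M = n (k + m)) (j : Fin (n M)) :
    Fprod n F k m i (Fin.cast h j) = if (i : ℕ) = (j : ℕ) then 1 else 0 := by
  subst hm
  rw [Fprod, Matrix.one_apply]
  congr 1
  simp [Fin.ext_iff]

/-- Entry of `Fprod` in the case `m = m' + 1`. -/
theorem Fprod_expand_apply (k m m' : ℕ) (hm : m = m' + 1) (i : Fin (n k)) {M : ℕ}
    (h : n M = n (k + m)) (h2 : n M = n ((k + 1) + m')) (j : Fin (n M)) :
    Fprod n F k m i (Fin.cast h j)
      = ∑ x : Fin (n (k + 1)), F k i x * Fprod n F (k + 1) m' x (Fin.cast h2 j) := by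
  subst hm
  rw [Fprod, Matrix.mul_apply]
  simp only [Matrix.submatrix_apply, id_eq, Fin.cast_cast]

theorem Fprod_congr (k m m' : ℕ) (hmm : m = m') (i : Fin (n k)) {M : ℕ}
    (h : n M = n (k + m)) (h' : n M = n (k + m')) (j : Fin (n M)) :
    Fprod n F k m i (Fin.cast h j) = Fprod n F k m' i (Fin.cast h' j) := by
  subst hmm; rfl

/-- The block upper-unitriangular matrix with blocks
`U_{k,j} = F_k F_{k+1} ⋯ F_{j-1}` for `k ≤ j`. -/
noncomputable def Umat :
    Matrix ((k : Fin (d + 1)) × Fin (n k)) ((k : Fin (d + 1)) × Fin (n k)) ℂ :=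
  Matrix.of fun p q =>
    if h : (p.1 : ℕ) ≤ (q.1 : ℕ) then
      Fprod n F (p.1 : ℕ) ((q.1 : ℕ) - (p.1 : ℕ)) p.2
        (Fin.cast (congrArg n (by omega : ((q.1 : ℕ)) = (p.1 : ℕ) + ((q.1 : ℕ) - (p.1 : ℕ)))) q.2)
    else 0

theorem Umat_apply_le (p q : (k : Fin (d + 1)) × Fin (n k)) (h : (p.1 : ℕ) ≤ (q.1 : ℕ)) :
    Umat d n F p q
      = Fprod n F (p.1 : ℕ) ((q.1 : ℕ) - (p.1 : ℕ)) p.2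
        (Fin.cast (congrArg n (by omega : ((q.1 : ℕ)) = (p.1 : ℕ) + ((q.1 : ℕ) - (p.1 : ℕ)))) q.2) := by
  simp only [Umat, Matrix.of_apply, dif_pos h]

theorem Umat_apply_not_le (p q : (k : Fin (d + 1)) × Fin (n k)) (h : ¬ (p.1 : ℕ) ≤ (q.1 : ℕ)) :
    Umat d n F p q = 0 := by
  simp only [Umat, Matrix.of_apply, dif_neg h]

theorem Umat_apply_diag (p q : (k : Fin (d + 1)) × Fin (n k)) (h : p.1 = q.1) :
    Umat d n F p q = if (p.2 : ℕ) = (q.2 : ℕ) then 1 else 0 := by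
  rw [Umat_apply_le d n F p q (le_of_eq (congrArg Fin.val h))]
  exact Fprod_diag_apply n F _ _ (by omega) _ _ _

theorem Umat_blockTriangular : (Umat d n F).BlockTriangular Sigma.fst := by
  intro p q hlt
  exact Umat_apply_not_le d n F p q (not_le.mpr hlt)

theorem Umat_det : (Umat d n F).det = 1 := by
  rw [(Umat_blockTriangular d n F).det_fintype]
  apply Finset.prod_eq_one
  intro a _
  have hblock : (Umat d n F).toSquareBlock Sigma.fst a = 1 := by
    ext p q
    rw [Matrix.toSquareBlock_def]
    have h1 : p.1.1 = q.1.1 := p.2.trans q.2.symm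
    rw [Matrix.of_apply, Umat_apply_diag d n F p.1 q.1 h1, Matrix.one_apply]
    congr 1
    rw [eq_iff_iff]
    constructor
    · intro hv
      apply Subtype.ext
      exact Sigma.ext h1 ((Fin.heq_ext_iff (congrArg n (congrArg Fin.val h1))).mpr hv)
    · intro hpq; rw [hpq]
  rw [hblock, Matrix.det_one]

/-- Entries of `(1 - T) * U` above the block diagonal vanish. -/
theorem LU_apply_lt (p q : (k : Fin (d + 1)) × Fin (n k)) (h : (p.1 : ℕ) < (q.1 : ℕ)) :
    ((1 - Tmat d n F G) * Umat d n F) p q = 0 := by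
  have hpd : ¬ ((p.1 : ℕ) = d) := by have := q.1.isLt; omega
  rw [Matrix.sub_mul, Matrix.one_mul, Matrix.sub_apply]
  have hTU : (Tmat d n F G * Umat d n F) p q = Umat d n F p q := by
    rw [Matrix.mul_apply, ← Finset.univ_sigma_univ, Finset.sum_sigma]
    have hplt : (p.1 : ℕ) + 1 < d + 1 := by have := q.1.isLt; omega
    rw [Finset.sum_eq_single (⟨(p.1 : ℕ) + 1, hplt⟩ : Fin (d + 1))]
    · have hsum : ∀ x : Fin (n ((p.1 : ℕ) + 1)),
          Tmat d n F G p ⟨⟨(p.1 : ℕ) + 1, hplt⟩, x⟩ = F (p.1 : ℕ) p.2 x := by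
        intro x
        simp [Tmat, Matrix.of_apply, hpd]
      have hUx : ∀ x : Fin (n ((p.1 : ℕ) + 1)),
          Umat d n F ⟨⟨(p.1 : ℕ) + 1, hplt⟩, x⟩ q
            = Fprod n F ((p.1 : ℕ) + 1) ((q.1 : ℕ) - ((p.1 : ℕ) + 1)) x
              (Fin.cast (congrArg n (by omega :
                ((q.1 : ℕ)) = ((p.1 : ℕ) + 1) + ((q.1 : ℕ) - ((p.1 : ℕ) + 1)))) q.2) := by
        intro x
        exact Umat_apply_le d n F ⟨⟨(p.1 : ℕ) + 1, hplt⟩, x⟩ q (by simpa using h)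
      rw [Umat_apply_le d n F p q (le_of_lt h)]
      rw [Fprod_expand_apply n F (p.1 : ℕ) ((q.1 : ℕ) - (p.1 : ℕ)) ((q.1 : ℕ) - ((p.1 : ℕ) + 1))
        (by omega) p.2 _ (congrArg n (by omega :
          ((q.1 : ℕ)) = (((p.1 : ℕ) + 1) + ((q.1 : ℕ) - ((p.1 : ℕ) + 1))))) q.2]
      exact Finset.sum_congr rfl fun x _ => by rw [hsum x, hUx x]
    · intro i _ hi
      apply Finset.sum_eq_zero
      intro x _
      have hT0 : Tmat d n F G p ⟨i, x⟩ = 0 := by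
        simp only [Tmat, Matrix.of_apply, dif_neg hpd]
        rw [dif_neg]
        intro hix
        exact hi (Fin.ext hix)
      rw [hT0, zero_mul]
    · intro hmem; exact absurd (Finset.mem_univ _) hmem
  rw [hTU, sub_self]

/-- Diagonal blocks of `(1 - T) * U` other than the last one are the identity. -/
theorem LU_apply_diag (p q : (k : Fin (d + 1)) × Fin (n k)) (hdd : (p.1 : ℕ) < d)
    (h : p.1 = q.1) :
    ((1 - Tmat d n F G) * Umat d n F) p q = if p = q then 1 else 0 := by
  rw [Matrix.sub_mul, Matrix.one_mul, Matrix.sub_apply]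
  have hpd : ¬ ((p.1 : ℕ) = d) := by omega
  have hTU : (Tmat d n F G * Umat d n F) p q = 0 := by
    rw [Matrix.mul_apply]
    apply Finset.sum_eq_zero
    intro r _
    by_cases hr : (r.1 : ℕ) = (p.1 : ℕ) + 1
    · have hU0 : Umat d n F r q = 0 := by
        apply Umat_apply_not_le
        have : (q.1 : ℕ) = (p.1 : ℕ) := congrArg Fin.val h.symm
        omega
      rw [hU0, mul_zero]
    · have hT0 : Tmat d n F G p r = 0 := by
        simp only [Tmat, Matrix.of_apply, dif_neg hpd]
        rw [dif_neg hr]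
      rw [hT0, zero_mul]
  rw [hTU, sub_zero, Umat_apply_diag d n F p q h]
  congr 1
  rw [eq_iff_iff]
  constructor
  · intro hv
    exact Sigma.ext h ((Fin.heq_ext_iff (congrArg n (congrArg Fin.val h))).mpr hv)
  · intro hpq; rw [hpq]

/-- The last diagonal block of `(1 - T) * U` is `1 - D`. -/
theorem LU_apply_last (p q : (k : Fin (d + 1)) × Fin (n k)) (hp : (p.1 : ℕ) = d)
    (hq : (q.1 : ℕ) = d) :
    ((1 - Tmat d n F G) * Umat d n F) p q
      = (1 - Dmat d n F G) (Fin.cast (congrArg n hp) p.2) (Fin.cast (congrArg n hq) q.2) := by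
  rw [Matrix.sub_mul, Matrix.one_mul, Matrix.sub_apply, Matrix.sub_apply]
  have h1 : Umat d n F p q = (1 : Matrix (Fin (n d)) (Fin (n d)) ℂ)
      (Fin.cast (congrArg n hp) p.2) (Fin.cast (congrArg n hq) q.2) := by
    rw [Umat_apply_diag d n F p q (Fin.ext (hp.trans hq.symm)), Matrix.one_apply]
    congr 1
    simp [Fin.ext_iff]
  rw [h1]
  congr 1
  -- now: (T * U) p q = Dmat (cast p.2) (cast q.2)
  rw [Matrix.mul_apply, ← Finset.univ_sigma_univ, Finset.sum_sigma]
  have hT : ∀ (i : Fin (d + 1)) (x : Fin (n (i : ℕ))),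
      Tmat d n F G p ⟨i, x⟩ = G (i : ℕ) (Fin.cast (congrArg n hp) p.2) x := by
    intro i x
    simp only [Tmat, Matrix.of_apply, dif_pos hp]
  have hterm : ∀ (i : Fin (d + 1)) (x : Fin (n (i : ℕ))),
      Umat d n F ⟨i, x⟩ q = Fprod n F (i : ℕ) ((q.1 : ℕ) - (i : ℕ)) x
        (Fin.cast (congrArg n (by omega :
          ((q.1 : ℕ)) = (i : ℕ) + ((q.1 : ℕ) - (i : ℕ)))) q.2) := by
    intro i x
    exact Umat_apply_le d n F ⟨i, x⟩ q (by have := i.isLt; omega)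
  simp only [hT, hterm]
  rw [Fin.sum_univ_castSucc]
  rw [Dmat, Matrix.add_apply, add_comm]
  congr 1
  · -- the term at Fin.last d equals G d (cast p.2) (cast q.2)
    show ∑ x : Fin (n d), G d (Fin.cast (congrArg n hp) p.2) x *
        Fprod n F d ((q.1 : ℕ) - d) x
          (Fin.cast (congrArg n (by omega :
            ((q.1 : ℕ)) = d + ((q.1 : ℕ) - d))) q.2) = _
    have hz : ∀ x : Fin (n d),
        Fprod n F d ((q.1 : ℕ) - d) x
          (Fin.cast (congrArg n (by omega :
            ((q.1 : ℕ)) = d + ((q.1 : ℕ) - d))) q.2)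
          = if (x : ℕ) = ((q.2 : ℕ)) then 1 else 0 := by
      intro x
      exact Fprod_diag_apply n F d _ (by omega) x _ q.2
    simp only [hz]
    have hrw : ∀ x : Fin (n d),
        ((x : ℕ) = ((q.2 : ℕ))) = (x = Fin.cast (congrArg n hq) q.2) := by
      intro x
      rw [eq_iff_iff]
      simp [Fin.ext_iff]
    simp only [hrw, mul_ite, mul_one, mul_zero]
    simp
  · -- sum over k : Fin d
    rw [Matrix.sum_apply]
    apply Finset.sum_congr rfl
    intro k _
    show ∑ x : Fin (n (k : ℕ)), G (k : ℕ) (Fin.cast (congrArg n hp) p.2) x *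
        Fprod n F (k : ℕ) ((q.1 : ℕ) - (k : ℕ)) x
          (Fin.cast (congrArg n (by omega :
            ((q.1 : ℕ)) = (k : ℕ) + ((q.1 : ℕ) - (k : ℕ)))) q.2) = _
    rw [Matrix.mul_apply]
    apply Finset.sum_congr rfl
    intro x _
    exact congrArg (fun z => G (k : ℕ) (Fin.cast (congrArg n hp) p.2) x * z)
      (Fprod_congr n F (k : ℕ) ((q.1 : ℕ) - (k : ℕ)) (d - (k : ℕ)) (by rw [hq]) x
        (congrArg n (by omega : ((q.1 : ℕ)) = (k : ℕ) + ((q.1 : ℕ) - (k : ℕ))))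
        (congrArg n (by omega : ((q.1 : ℕ)) = (k : ℕ) + (d - (k : ℕ)))) q.2)

/-- The subtype of the last block is equivalent to `Fin (n d)`. -/
noncomputable def lastEquiv :
    {x : (k : Fin (d + 1)) × Fin (n k) //
      (fun p : (k : Fin (d + 1)) × Fin (n k) => OrderDual.toDual p.1) x
        = OrderDual.toDual (Fin.last d)} ≃ Fin (n d) where
  toFun p := Fin.cast (congrArg n
    ((congrArg Fin.val (OrderDual.toDual_inj.mp p.2)).trans (Fin.val_last d))) p.1.2
  invFun x := ⟨⟨Fin.last d, Fin.cast (congrArg n (Fin.val_last d).symm) x⟩, rfl⟩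
  left_inv p := by
    apply Subtype.ext
    have h1 : p.1.1 = Fin.last d := OrderDual.toDual_inj.mp p.2
    refine (Sigma.ext h1 ?_).symm
    rw [Fin.heq_ext_iff (congrArg n (congrArg Fin.val h1))]
    simp
  right_inv x := by
    apply Fin.ext
    simp

end Aux

/-- Block determinant lemma: `det (1 - T) = det (1 - D)`. -/
theorem det_one_sub_block_eq (d : ℕ) (hd : 1 ≤ d) (n : ℕ → ℕ) (hn : ∀ k ≤ d, 0 < n k)
    (F : ∀ k : ℕ, Matrix (Fin (n k)) (Fin (n (k + 1))) ℂ)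
    (G : ∀ k : ℕ, Matrix (Fin (n d)) (Fin (n k)) ℂ) :
    (1 - Tmat d n F G).det = (1 - Dmat d n F G).det := by
  have key : ((1 - Tmat d n F G) * Umat d n F).det = (1 - Dmat d n F G).det := by
    have hbt : ((1 - Tmat d n F G) * Umat d n F).BlockTriangular
        (fun p : (k : Fin (d + 1)) × Fin (n k) => OrderDual.toDual p.1) := by
      intro r s hlt
      have h2 : r.1 < s.1 := hlt
      exact LU_apply_lt d n F G r s h2
    rw [hbt.det_fintype]
    rw [Fintype.prod_eq_single (OrderDual.toDual (Fin.last d))]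
    · -- last block
      have hblock : ((1 - Tmat d n F G) * Umat d n F).toSquareBlock
            (fun p : (k : Fin (d + 1)) × Fin (n k) => OrderDual.toDual p.1)
            (OrderDual.toDual (Fin.last d))
          = (1 - Dmat d n F G).submatrix (lastEquiv d n) (lastEquiv d n) := by
        ext p q
        rw [Matrix.toSquareBlock_def, Matrix.of_apply, Matrix.submatrix_apply]
        have hp : (p.1.1 : ℕ) = d :=
          (congrArg Fin.val (OrderDual.toDual_inj.mp p.2)).trans (Fin.val_last d)
        have hq : (q.1.1 : ℕ) = d :=
          (congrArg Fin.val (OrderDual.toDual_inj.mp q.2)).trans (Fin.val_last d)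
        rw [LU_apply_last d n F G p.1 q.1 hp hq]
        rfl
      rw [hblock, Matrix.det_submatrix_equiv_self]
    · -- other blocks
      intro a ha
      have hblock : ((1 - Tmat d n F G) * Umat d n F).toSquareBlock
            (fun p : (k : Fin (d + 1)) × Fin (n k) => OrderDual.toDual p.1) a = 1 := by
        ext p q
        rw [Matrix.toSquareBlock_def, Matrix.of_apply]
        have hpa : p.1.1 = OrderDual.ofDual a := OrderDual.toDual_inj.mp p.2
        have hqa : q.1.1 = OrderDual.ofDual a := OrderDual.toDual_inj.mp q.2
        have hlt : (p.1.1 : ℕ) < d := by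
          have hne : OrderDual.ofDual a ≠ Fin.last d := by
            intro hcon
            exact ha (by rw [← hcon]; rfl)
          have := Fin.val_lt_last hne
          rw [hpa]
          omega
        rw [LU_apply_diag d n F G p.1 q.1 hlt (hpa.trans hqa.symm), Matrix.one_apply]
        congr 1
        rw [eq_iff_iff]
        constructor
        · intro h; exact Subtype.ext h
        · intro h; rw [h]
      rw [hblock, Matrix.det_one]
  calc (1 - Tmat d n F G).det
      = (1 - Tmat d n F G).det * (Umat d n F).det := by rw [Umat_det, mul_one]
    _ = ((1 - Tmat d n F G) * Umat d n F).det := (Matrix.det_mul _ _).symm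
    _ = (1 - Dmat d n F G).det := key
end

section
/- Let x, x′ ∈ ℂ and let ψ, φ̄ : ℤ → ℂ be sequences satisfying, for all n ≥ 0: x·ψ_n = Σ_{j=−1}^{d2} α_j(n)·ψ_{n−j} and x′·φ̄_n = Σ_{l=−1}^{d2} α_l(n+l)·φ̄_{n+l}. Then for every N ≥ 1: (x − x′)·Σ_{n=0}^{N−1} ψ_n·φ̄_n = γ(N−1)·ψ_N·φ̄_{N−1} − Σ_{j=1}^{d2} Σ_{k=0}^{j−1} α_j(N+k)·φ̄_{N+k}·ψ_{N+k−j}. (Generalized Christoffel–Darboux relation for the kernel K_{11}.) -/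
open BigOperators


/-- Telescoping over integer intervals. -/
lemma cd_int_telescope (g : ℤ → ℂ) (j : ℤ) (hj : 0 ≤ j) :
    ∑ k ∈ Finset.Icc (0 : ℤ) (j - 1), (g (k + 1) - g k) = g j - g 0 := by
  refine Int.le_induction (motive := fun j _ => ∑ k ∈ Finset.Icc (0 : ℤ) (j - 1), (g (k + 1) - g k) = g j - g 0) ?_ ?_ j hj
  · have : Finset.Icc (0 : ℤ) (0 - 1) = ∅ := by apply Finset.Icc_eq_empty; omega
    simp [this]
  · intro n hn ih
    have h1 : Finset.Icc (0 : ℤ) (n + 1 - 1) = insert n (Finset.Icc 0 (n - 1)) := by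
      ext y; simp only [Finset.mem_Icc, Finset.mem_insert]; omega
    rw [h1, Finset.sum_insert (by simp only [Finset.mem_Icc]; omega), ih]
    ring

/-- The boundary term in the Christoffel–Darboux relation. -/
noncomputable def cdF (d2 : ℕ) (α : ℤ → ℤ → ℂ) (γ : ℤ → ℂ) (ψ φb : ℤ → ℂ) (M : ℤ) : ℂ :=
  γ (M - 1) * ψ M * φb (M - 1) -
    ∑ j ∈ Finset.Icc (1 : ℤ) (d2 : ℤ), ∑ k ∈ Finset.Icc (0 : ℤ) (j - 1),
      α j (M + k) * φb (M + k) * ψ (M + k - j)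

/-- Generalized Christoffel–Darboux relation for the kernel `K₁₁`. -/
theorem christoffel_darboux_K11
    (d1 d2 : ℕ) (hd1 : 1 ≤ d1) (hd2 : 1 ≤ d2)
    (α β : ℤ → ℤ → ℂ) (γ : ℤ → ℂ)
    (hαsupp : ∀ j n : ℤ, (j < -1 ∨ (d2 : ℤ) < j) → α j n = 0)
    (hβsupp : ∀ j n : ℤ, (j < -1 ∨ (d1 : ℤ) < j) → β j n = 0)
    (hαγ : ∀ n : ℤ, α (-1) n = γ n)
    (hβγ : ∀ n : ℤ, β (-1) n = γ n)
    (hαsemi : ∀ j n : ℤ, n < j → α j n = 0)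
    (hβsemi : ∀ j n : ℤ, n < j → β j n = 0)
    (hαneg : ∀ j n : ℤ, n < 0 → α j n = 0)
    (hβneg : ∀ j n : ℤ, n < 0 → β j n = 0)
    (hγneg : ∀ n : ℤ, n < 0 → γ n = 0)
    (x x' : ℂ) (ψ φb : ℤ → ℂ)
    (hψ : ∀ n : ℤ, 0 ≤ n →
      x * ψ n = ∑ j ∈ Finset.Icc (-1 : ℤ) (d2 : ℤ), α j n * ψ (n - j))
    (hφb : ∀ n : ℤ, 0 ≤ n →
      x' * φb n = ∑ l ∈ Finset.Icc (-1 : ℤ) (d2 : ℤ), α l (n + l) * φb (n + l))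
    (N : ℤ) (hN : 1 ≤ N) :
    (x - x') * ∑ n ∈ Finset.Icc (0 : ℤ) (N - 1), ψ n * φb n =
      γ (N - 1) * ψ N * φb (N - 1) -
        ∑ j ∈ Finset.Icc (1 : ℤ) (d2 : ℤ), ∑ k ∈ Finset.Icc (0 : ℤ) (j - 1),
          α j (N + k) * φb (N + k) * ψ (N + k - j) := by
  have hd2' : (1 : ℤ) ≤ (d2 : ℤ) := by exact_mod_cast hd2
  -- F 0 = 0
  have hF0 : cdF d2 α γ ψ φb 0 = 0 := by
    simp only [cdF]
    rw [hγneg (0 - 1) (by omega)]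
    have : ∀ j ∈ Finset.Icc (1 : ℤ) (d2 : ℤ),
        ∑ k ∈ Finset.Icc (0 : ℤ) (j - 1), α j (0 + k) * φb (0 + k) * ψ (0 + k - j) = 0 := by
      intro j hj
      apply Finset.sum_eq_zero
      intro k hk
      simp only [Finset.mem_Icc] at hj hk
      rw [hαsemi j (0 + k) (by omega)]
      ring
    rw [Finset.sum_congr rfl this]
    simp
  -- the key one-step identity
  have star : ∀ M : ℤ, 0 ≤ M →
      (x - x') * (ψ M * φb M) = cdF d2 α γ ψ φb (M + 1) - cdF d2 α γ ψ φb M := by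
    intro M hM
    have hsplit : Finset.Icc (-1 : ℤ) (d2 : ℤ)
        = insert (-1) (insert 0 (Finset.Icc 1 (d2 : ℤ))) := by
      ext y; simp only [Finset.mem_Icc, Finset.mem_insert]; omega
    have hnm1 : (-1 : ℤ) ∉ insert (0 : ℤ) (Finset.Icc 1 (d2 : ℤ)) := by
      simp only [Finset.mem_insert, Finset.mem_Icc]; omega
    have hn0 : (0 : ℤ) ∉ Finset.Icc (1 : ℤ) (d2 : ℤ) := by
      simp only [Finset.mem_Icc]; omega
    have h1 : x * ψ M = γ M * ψ (M + 1) + α 0 M * ψ M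
        + ∑ j ∈ Finset.Icc (1 : ℤ) (d2 : ℤ), α j M * ψ (M - j) := by
      rw [hψ M hM, hsplit, Finset.sum_insert hnm1, Finset.sum_insert hn0, hαγ]
      norm_num
      ring
    have h2 : x' * φb M = γ (M - 1) * φb (M - 1) + α 0 M * φb M
        + ∑ l ∈ Finset.Icc (1 : ℤ) (d2 : ℤ), α l (M + l) * φb (M + l) := by
      rw [hφb M hM, hsplit, Finset.sum_insert hnm1, Finset.sum_insert hn0]
      rw [show M + -1 = M - 1 by ring, hαγ]
      norm_num
      ring
    -- per-j telescoping
    have inner : ∀ j ∈ Finset.Icc (1 : ℤ) (d2 : ℤ),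
        (∑ k ∈ Finset.Icc (0 : ℤ) (j - 1),
            α j (M + 1 + k) * φb (M + 1 + k) * ψ (M + 1 + k - j))
          - ∑ k ∈ Finset.Icc (0 : ℤ) (j - 1), α j (M + k) * φb (M + k) * ψ (M + k - j)
        = α j (M + j) * φb (M + j) * ψ M - α j M * φb M * ψ (M - j) := by
      intro j hj
      simp only [Finset.mem_Icc] at hj
      have := cd_int_telescope (fun k => α j (M + k) * φb (M + k) * ψ (M + k - j)) j
        (by omega)
      rw [show M + j - j = M by ring, show M + 0 = M by ring] at this
      rw [← Finset.sum_sub_distrib, ← this]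
      apply Finset.sum_congr rfl
      intro k hk
      rw [show M + 1 + k = M + (k + 1) by ring]
    have hD : (∑ j ∈ Finset.Icc (1 : ℤ) (d2 : ℤ), ∑ k ∈ Finset.Icc (0 : ℤ) (j - 1),
            α j (M + 1 + k) * φb (M + 1 + k) * ψ (M + 1 + k - j))
          - ∑ j ∈ Finset.Icc (1 : ℤ) (d2 : ℤ), ∑ k ∈ Finset.Icc (0 : ℤ) (j - 1),
            α j (M + k) * φb (M + k) * ψ (M + k - j)
        = (∑ l ∈ Finset.Icc (1 : ℤ) (d2 : ℤ), α l (M + l) * φb (M + l)) * ψ M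
          - (∑ j ∈ Finset.Icc (1 : ℤ) (d2 : ℤ), α j M * ψ (M - j)) * φb M := by
      rw [← Finset.sum_sub_distrib, Finset.sum_congr rfl inner, Finset.sum_sub_distrib,
        Finset.sum_mul, Finset.sum_mul]
      congr 1
      all_goals
        refine Finset.sum_congr rfl fun i _ => by ring
    simp only [cdF]
    rw [show M + 1 - 1 = M by ring]
    linear_combination φb M * h1 - ψ M * h2 + hD
  -- main induction
  refine Int.le_induction (motive := fun N _ =>
    (x - x') * ∑ n ∈ Finset.Icc (0 : ℤ) (N - 1), ψ n * φb n =
      γ (N - 1) * ψ N * φb (N - 1) -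
        ∑ j ∈ Finset.Icc (1 : ℤ) (d2 : ℤ), ∑ k ∈ Finset.Icc (0 : ℤ) (j - 1),
          α j (N + k) * φb (N + k) * ψ (N + k - j)) ?_ ?_ N hN
  · have h1 : Finset.Icc (0 : ℤ) (1 - 1) = {0} := by
      ext y; simp only [Finset.mem_Icc, Finset.mem_singleton]; omega
    rw [h1, Finset.sum_singleton]
    have := star 0 le_rfl
    rw [hF0] at this
    simpa [cdF] using this
  · intro n hn ih
    try dsimp only at ih ⊢
    have h1x : Finset.Icc (0 : ℤ) (n + 1 - 1) = insert n (Finset.Icc 0 (n - 1)) := by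
      ext y; simp only [Finset.mem_Icc, Finset.mem_insert]; omega
    rw [h1x, Finset.sum_insert (by simp only [Finset.mem_Icc]; omega)]
    have hstep := star n (by omega)
    have goal1 : (x - x') * (ψ n * φb n + ∑ n ∈ Finset.Icc (0 : ℤ) (n - 1), ψ n * φb n)
        = cdF d2 α γ ψ φb (n + 1) := by
      rw [mul_add, hstep]
      have ih' : (x - x') * ∑ m ∈ Finset.Icc (0 : ℤ) (n - 1), ψ m * φb m
          = cdF d2 α γ ψ φb n := ih
      rw [ih']
      ring
    rw [goal1]
    simp only [cdF]
end

section
/- Let y, y′ ∈ ℂ and let ψ̄, φ : ℤ → ℂ be sequences satisfying, for all n ≥ 0: y′·ψ̄_n = Σ_{j=−1}^{d1} β_j(n+j)·ψ̄_{n+j} and y·φ_n = Σ_{j=−1}^{d1} β_j(n)·φ_{n−j}. Then for every N ≥ 1: (y′ − y)·Σ_{n=0}^{N−1} ψ̄_n·φ_n = −γ(N−1)·ψ̄_{N−1}·φ_N + Σ_{j=1}^{d1} Σ_{k=0}^{j−1} β_j(N+k)·ψ̄_{N+k}·φ_{N−j+k}. (Generalized Christoffel–Darboux relation for the kernel K_{22}.)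 -/
open BigOperators

/-- Generalized Christoffel–Darboux relation for the kernel `K₂₂`. -/
theorem christoffel_darboux_K22
    (d1 d2 : ℕ) (hd1 : 1 ≤ d1) (hd2 : 1 ≤ d2)
    (α β : ℤ → ℤ → ℂ) (γ : ℤ → ℂ)
    (hαsupp : ∀ j n : ℤ, (j < -1 ∨ (d2 : ℤ) < j) → α j n = 0)
    (hβsupp : ∀ j n : ℤ, (j < -1 ∨ (d1 : ℤ) < j) → β j n = 0)
    (hαγ : ∀ n : ℤ, α (-1) n = γ n)
    (hβγ : ∀ n : ℤ, β (-1) n = γ n)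
    (hαsemi : ∀ j n : ℤ, n < j → α j n = 0)
    (hβsemi : ∀ j n : ℤ, n < j → β j n = 0)
    (hαneg : ∀ j n : ℤ, n < 0 → α j n = 0)
    (hβneg : ∀ j n : ℤ, n < 0 → β j n = 0)
    (hγneg : ∀ n : ℤ, n < 0 → γ n = 0)
    (y y' : ℂ) (ψb φ : ℤ → ℂ)
    (hψb : ∀ n : ℤ, 0 ≤ n →
      y' * ψb n = ∑ j ∈ Finset.Icc (-1 : ℤ) (d1 : ℤ), β j (n + j) * ψb (n + j))
    (hφ : ∀ n : ℤ, 0 ≤ n →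
      y * φ n = ∑ j ∈ Finset.Icc (-1 : ℤ) (d1 : ℤ), β j n * φ (n - j))
    (N : ℤ) (hN : 1 ≤ N) :
    (y' - y) * ∑ n ∈ Finset.Icc (0 : ℤ) (N - 1), ψb n * φ n =
      -(γ (N - 1) * ψb (N - 1) * φ N) +
        ∑ j ∈ Finset.Icc (1 : ℤ) (d1 : ℤ), ∑ k ∈ Finset.Icc (0 : ℤ) (j - 1),
          β j (N + k) * ψb (N + k) * φ (N - j + k) := by
  have hd1' : (1 : ℤ) ≤ (d1 : ℤ) := by exact_mod_cast hd1
  -- split of the recursion index set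
  have hsplit : Finset.Icc (-1 : ℤ) (d1 : ℤ)
      = insert (-1) (insert 0 (Finset.Icc (1 : ℤ) (d1 : ℤ))) := by
    ext x
    simp only [Finset.mem_Icc, Finset.mem_insert]
    omega
  have hm1 : (-1 : ℤ) ∉ insert (0 : ℤ) (Finset.Icc (1 : ℤ) (d1 : ℤ)) := by
    simp only [Finset.mem_insert, Finset.mem_Icc]
    omega
  have hm0 : (0 : ℤ) ∉ Finset.Icc (1 : ℤ) (d1 : ℤ) := by
    simp only [Finset.mem_Icc]
    omega
  -- Step lemma A
  have stepA : ∀ n : ℤ, 0 ≤ n →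
      (y' - y) * (ψb n * φ n)
        = γ (n - 1) * ψb (n - 1) * φ n - γ n * ψb n * φ (n + 1)
          + ∑ j ∈ Finset.Icc (1 : ℤ) (d1 : ℤ),
              (β j (n + j) * ψb (n + j) * φ n - β j n * ψb n * φ (n - j)) := by
    intro n hn
    have e1 : y' * ψb n
        = γ (n - 1) * ψb (n - 1) + β 0 n * ψb n
          + ∑ j ∈ Finset.Icc (1 : ℤ) (d1 : ℤ), β j (n + j) * ψb (n + j) := by
      rw [hψb n hn, hsplit, Finset.sum_insert hm1, Finset.sum_insert hm0, hβγ]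
      have h1 : n + (-1 : ℤ) = n - 1 := by ring
      have h2 : n + (0 : ℤ) = n := by ring
      rw [h1, h2]
      ring
    have e2 : y * φ n
        = γ n * φ (n + 1) + β 0 n * φ n
          + ∑ j ∈ Finset.Icc (1 : ℤ) (d1 : ℤ), β j n * φ (n - j) := by
      rw [hφ n hn, hsplit, Finset.sum_insert hm1, Finset.sum_insert hm0, hβγ]
      have h1 : n - (-1 : ℤ) = n + 1 := by ring
      have h2 : n - (0 : ℤ) = n := by ring
      rw [h1, h2]
      ring
    have hA : (∑ j ∈ Finset.Icc (1 : ℤ) (d1 : ℤ), β j (n + j) * ψb (n + j)) * φ n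
        - ψb n * (∑ j ∈ Finset.Icc (1 : ℤ) (d1 : ℤ), β j n * φ (n - j))
        = ∑ j ∈ Finset.Icc (1 : ℤ) (d1 : ℤ),
            (β j (n + j) * ψb (n + j) * φ n - β j n * ψb n * φ (n - j)) := by
      rw [Finset.sum_mul, Finset.mul_sum, ← Finset.sum_sub_distrib]
      exact Finset.sum_congr rfl (fun j _ => by ring)
    have key : (y' - y) * (ψb n * φ n) = (y' * ψb n) * φ n - ψb n * (y * φ n) := by
      ring
    rw [key, e1, e2]
    linear_combination hA
  -- Telescoping lemma B
  have shiftsum : ∀ (f : ℤ → ℂ) (a b : ℤ),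
      ∑ k ∈ Finset.Icc (0 : ℤ) b, f (a + k) = ∑ m ∈ Finset.Icc a (a + b), f m := by
    intro f a b
    rw [show Finset.Icc a (a + b) = Finset.Icc (a + 0) (a + b) by rw [add_zero],
      ← Finset.map_add_left_Icc 0 b a, Finset.sum_map]
    rfl
  have stepB : ∀ j N' : ℤ, 1 ≤ j →
      ∑ k ∈ Finset.Icc (0 : ℤ) (j - 1), β j (N' + 1 + k) * ψb (N' + 1 + k) * φ (N' + 1 - j + k)
        = ∑ k ∈ Finset.Icc (0 : ℤ) (j - 1), β j (N' + k) * ψb (N' + k) * φ (N' - j + k)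
          + (β j (N' + j) * ψb (N' + j) * φ N' - β j N' * ψb N' * φ (N' - j)) := by
    intro j N' hj
    set f : ℤ → ℂ := fun m => β j m * ψb m * φ (m - j) with hf
    have l1 : ∑ k ∈ Finset.Icc (0 : ℤ) (j - 1),
        β j (N' + 1 + k) * ψb (N' + 1 + k) * φ (N' + 1 - j + k)
        = ∑ m ∈ Finset.Icc (N' + 1) (N' + j), f m := by
      rw [show Finset.Icc (N' + 1) (N' + j) = Finset.Icc (N' + 1) (N' + 1 + (j - 1)) by
        congr 1; ring, ← shiftsum f (N' + 1) (j - 1)]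
      refine Finset.sum_congr rfl (fun k _ => ?_)
      simp only [hf]
      congr 2
      ring
    have l2 : ∑ k ∈ Finset.Icc (0 : ℤ) (j - 1),
        β j (N' + k) * ψb (N' + k) * φ (N' - j + k)
        = ∑ m ∈ Finset.Icc N' (N' + j - 1), f m := by
      rw [show Finset.Icc N' (N' + j - 1) = Finset.Icc N' (N' + (j - 1)) by congr 1; ring,
        ← shiftsum f N' (j - 1)]
      refine Finset.sum_congr rfl (fun k _ => ?_)
      simp only [hf]
      congr 2
      ring
    have h1 : Finset.Icc (N' + 1) (N' + j)
        = insert (N' + j) (Finset.Icc (N' + 1) (N' + j - 1)) := by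
      ext x
      simp only [Finset.mem_Icc, Finset.mem_insert]
      omega
    have h2 : Finset.Icc N' (N' + j - 1)
        = insert N' (Finset.Icc (N' + 1) (N' + j - 1)) := by
      ext x
      simp only [Finset.mem_Icc, Finset.mem_insert]
      omega
    have hM1 : N' + j ∉ Finset.Icc (N' + 1) (N' + j - 1) := by
      simp only [Finset.mem_Icc]; omega
    have hM2 : N' ∉ Finset.Icc (N' + 1) (N' + j - 1) := by
      simp only [Finset.mem_Icc]; omega
    rw [l1, l2, h1, h2, Finset.sum_insert hM1, Finset.sum_insert hM2]
    simp only [hf]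
    have : N' + j - j = N' := by ring
    rw [this]
    ring
  -- Main induction
  have main : ∀ M : ℤ, 0 ≤ M →
      (y' - y) * ∑ n ∈ Finset.Icc (0 : ℤ) (M - 1), ψb n * φ n =
        -(γ (M - 1) * ψb (M - 1) * φ M) +
          ∑ j ∈ Finset.Icc (1 : ℤ) (d1 : ℤ), ∑ k ∈ Finset.Icc (0 : ℤ) (j - 1),
            β j (M + k) * ψb (M + k) * φ (M - j + k) := by
    intro M
    refine Int.le_induction (motive := fun M _ => (y' - y) * ∑ n ∈ Finset.Icc (0 : ℤ) (M - 1), ψb n * φ n =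
        -(γ (M - 1) * ψb (M - 1) * φ M) +
          ∑ j ∈ Finset.Icc (1 : ℤ) (d1 : ℤ), ∑ k ∈ Finset.Icc (0 : ℤ) (j - 1),
            β j (M + k) * ψb (M + k) * φ (M - j + k)) ?_ ?_ M
    · show (y' - y) * ∑ n ∈ Finset.Icc (0 : ℤ) ((0:ℤ) - 1), ψb n * φ n = _
      rw [show (0 : ℤ) - 1 = -1 by ring, Finset.Icc_eq_empty (by omega), Finset.sum_empty,
        mul_zero, hγneg (-1) (by omega)]
      rw [Finset.sum_eq_zero]
      · ring
      · intro j hj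
        rw [Finset.mem_Icc] at hj
        refine Finset.sum_eq_zero (fun k hk => ?_)
        rw [Finset.mem_Icc] at hk
        rw [hβsemi j (0 + k) (by omega)]
        ring
    · intro N' hN' ih
      show (y' - y) * ∑ n ∈ Finset.Icc (0 : ℤ) (N' + 1 - 1), ψb n * φ n = _
      have hIcc : Finset.Icc (0 : ℤ) (N' + 1 - 1) = insert N' (Finset.Icc (0 : ℤ) (N' - 1)) := by
        ext x
        simp only [Finset.mem_Icc, Finset.mem_insert]
        omega
      have hmem : N' ∉ Finset.Icc (0 : ℤ) (N' - 1) := by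
        simp only [Finset.mem_Icc]; omega
      rw [hIcc, Finset.sum_insert hmem, mul_add, ih, stepA N' hN']
      have hB : ∑ j ∈ Finset.Icc (1 : ℤ) (d1 : ℤ), ∑ k ∈ Finset.Icc (0 : ℤ) (j - 1),
            β j (N' + 1 + k) * ψb (N' + 1 + k) * φ (N' + 1 - j + k)
          = ∑ j ∈ Finset.Icc (1 : ℤ) (d1 : ℤ),
              (∑ k ∈ Finset.Icc (0 : ℤ) (j - 1), β j (N' + k) * ψb (N' + k) * φ (N' - j + k)
                + (β j (N' + j) * ψb (N' + j) * φ N' - β j N' * ψb N' * φ (N' - j))) := by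
        refine Finset.sum_congr rfl (fun j hj => ?_)
        rw [Finset.mem_Icc] at hj
        exact stepB j N' hj.1
      rw [hB, Finset.sum_add_distrib, show N' + 1 - 1 = N' by ring]
      ring
  exact main N (by omega)
end

section
/- Let ψ_n : ℂ → ℂ and φ̄_n : ℂ → ℂ (n ∈ ℤ) be differentiable functions satisfying, for all n ≥ 0 and all points of ℂ: ψ_n′(x) = −γ(n−1)·ψ_{n−1}(x) − Σ_{j=0}^{d1} β_j(n+j)·ψ_{n+j}(x) and φ̄_n′(x′) = Σ_{j=−1}^{d1} β_j(n)·φ̄_{n−j}(x′). Then for every N ≥ 1 and all x, x′ ∈ ℂ: Σ_{n=0}^{N−1} [ψ_n′(x)·φ̄_n(x′) + ψ_n(x)·φ̄_n′(x′)] = γ(N−1)·φ̄_N(x′)·ψ_{N−1}(x) − Σ_{j=1}^{d1} Σ_{k=0}^{j−1} β_j(N+k)·φ̄_{N+k−j}(x′)·ψ_{N+k}(x). (Differential generalized Christoffel–Darboux relation for the kernel K_{11}.) -/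
/-!
With `p n = ψ n x` and `q n = φb n x'`, the recurrences turn each Leibniz term
`p' n * q n + p n * q' n` into a difference `B (n + 1) - B n`, where `B N` is the right-hand side
of the identity: the `γ`-terms telescope directly, and the `β j`-terms
`β j n * q (n - j) * p n - β j (n + j) * q n * p (n + j)` are the increments of the window sums
`∑ k < j, β j (N + k) * q (N + k - j) * p (N + k)`. Summing gives `B N - B 0`, and `B` vanishes
for `N ≤ 0` because of the semi-infinite convention.
-/

open Finset

theorem Int.sum_Ico_sub {M : Type*} [AddCommGroup M] (f : ℤ → M) {m n : ℤ} (h : m ≤ n) :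
    ∑ i ∈ Ico m n, (f (i + 1) - f i) = f n - f m := by
  induction n, h using Int.leInduction with
  | base => simp
  | succ n hmn ih =>
    rw [← insert_Ico_right_eq_Ico_add_one hmn, sum_insert right_notMem_Ico, ih]
    abel

section ChristoffelDarboux

variable {R : Type*} [CommRing R] (d : ℕ) (β : ℤ → ℤ → R) (γ : ℤ → R) (p q : ℤ → R)

noncomputable def christoffelDarbouxBoundary (N : ℤ) : R :=
  γ (N - 1) * q N * p (N - 1) -
    ∑ j ∈ Icc (1 : ℤ) d, ∑ k ∈ Icc (0 : ℤ) (j - 1), β j (N + k) * q (N + k - j) * p (N + k)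

theorem christoffelDarbouxBoundary_eq_zero_of_nonpos (hγ : ∀ n < 0, γ n = 0)
    (hβ : ∀ j n, n < j → β j n = 0) {N : ℤ} (hN : N ≤ 0) :
    christoffelDarbouxBoundary d β γ p q N = 0 := by
  have hinner : ∀ j ∈ Icc (1 : ℤ) d, ∑ k ∈ Icc (0 : ℤ) (j - 1),
      β j (N + k) * q (N + k - j) * p (N + k) = 0 := fun j _ =>
    sum_eq_zero fun k hk => by
      rw [hβ j (N + k) (by rw [mem_Icc] at hk; omega), zero_mul, zero_mul]
  rw [christoffelDarbouxBoundary, hγ (N - 1) (by omega), sum_eq_zero hinner]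
  ring

theorem christoffelDarbouxBoundary_succ_sub (N : ℤ) :
    christoffelDarbouxBoundary d β γ p q (N + 1) - christoffelDarbouxBoundary d β γ p q N =
      γ N * q (N + 1) * p N - γ (N - 1) * q N * p (N - 1) +
        ∑ j ∈ Icc (1 : ℤ) d, (β j N * q (N - j) * p N - β j (N + j) * q N * p (N + j)) := by
  have hwindow : ∀ j ∈ Icc (1 : ℤ) d,
      ∑ k ∈ Icc (0 : ℤ) (j - 1), β j (N + 1 + k) * q (N + 1 + k - j) * p (N + 1 + k) -
        ∑ k ∈ Icc (0 : ℤ) (j - 1), β j (N + k) * q (N + k - j) * p (N + k) =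
      β j (N + j) * q N * p (N + j) - β j N * q (N - j) * p N := by
    intro j hj
    have := Int.sum_Ico_sub (fun k => β j (N + k) * q (N + k - j) * p (N + k))
      (show (0 : ℤ) ≤ j by rw [mem_Icc] at hj; omega)
    simp only [add_zero, add_sub_cancel_right] at this
    rw [Icc_sub_one_right_eq_Ico, ← sum_sub_distrib, ← this]
    refine sum_congr rfl fun k _ => ?_
    rw [add_right_comm N 1 k, add_assoc N k 1]
  rw [christoffelDarbouxBoundary, christoffelDarbouxBoundary, add_sub_cancel_right,
    sub_sub_sub_comm, ← sum_sub_distrib, sum_congr rfl hwindow, sub_eq_add_neg _ (∑ j ∈ _, _),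
    ← sum_neg_distrib]
  simp only [neg_sub]

theorem leibniz_term_eq_christoffelDarbouxBoundary_sub {N : ℤ} {dp dq : R}
    (hdp : dp = -(γ (N - 1) * p (N - 1)) - ∑ j ∈ Icc (0 : ℤ) d, β j (N + j) * p (N + j))
    (hdq : dq = ∑ j ∈ Icc (-1 : ℤ) d, β j N * q (N - j)) (hβγ : β (-1) N = γ N) :
    dp * q N + p N * dq =
      christoffelDarbouxBoundary d β γ p q (N + 1) - christoffelDarbouxBoundary d β γ p q N := by
  have hIcc_zero : Icc (0 : ℤ) d = insert 0 (Icc 1 (d : ℤ)) := by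
    rw [← insert_Icc_add_one_left_eq_Icc (by positivity : (0 : ℤ) ≤ d), zero_add]
  have hIcc_neg_one : Icc (-1 : ℤ) d = insert (-1) (Icc 0 (d : ℤ)) := by
    rw [← insert_Icc_add_one_left_eq_Icc (by omega : (-1 : ℤ) ≤ d), neg_add_cancel]
  have hsum : ∑ j ∈ Icc (1 : ℤ) d, (β j N * q (N - j) * p N - β j (N + j) * q N * p (N + j)) =
      p N * ∑ j ∈ Icc (1 : ℤ) d, β j N * q (N - j) -
        q N * ∑ j ∈ Icc (1 : ℤ) d, β j (N + j) * p (N + j) := by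
    rw [sum_sub_distrib, mul_sum, mul_sum]
    congr 1 <;> exact sum_congr rfl fun j _ => by ring
  rw [christoffelDarbouxBoundary_succ_sub, hsum, hdp, hdq, hIcc_neg_one, hIcc_zero,
    sum_insert (by simp), sum_insert (by simp), sum_insert (by simp), hβγ]
  simp only [add_zero, sub_zero, sub_neg_eq_add]
  ring

end ChristoffelDarboux

theorem christoffel_darboux_diff_K11_general
    (d1 : ℕ)
    (β : ℤ → ℤ → ℂ) (γ : ℤ → ℂ)
    (hβγ : ∀ n : ℤ, β (-1) n = γ n)
    (hβsemi : ∀ j n : ℤ, n < j → β j n = 0)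
    (hγneg : ∀ n : ℤ, n < 0 → γ n = 0)
    (ψ φb : ℤ → ℂ → ℂ)
    (hψ : ∀ n : ℤ, 0 ≤ n → ∀ x : ℂ,
      deriv (ψ n) x = -(γ (n - 1) * ψ (n - 1) x) -
        ∑ j ∈ Finset.Icc (0 : ℤ) (d1 : ℤ), β j (n + j) * ψ (n + j) x)
    (hφb : ∀ n : ℤ, 0 ≤ n → ∀ x' : ℂ,
      deriv (φb n) x' = ∑ j ∈ Finset.Icc (-1 : ℤ) (d1 : ℤ), β j n * φb (n - j) x')
    (N : ℤ) (x x' : ℂ) :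
    ∑ n ∈ Finset.Icc (0 : ℤ) (N - 1),
        (deriv (ψ n) x * φb n x' + ψ n x * deriv (φb n) x') =
      γ (N - 1) * φb N x' * ψ (N - 1) x -
        ∑ j ∈ Finset.Icc (1 : ℤ) (d1 : ℤ), ∑ k ∈ Finset.Icc (0 : ℤ) (j - 1),
          β j (N + k) * φb (N + k - j) x' * ψ (N + k) x := by
  set B := christoffelDarbouxBoundary d1 β γ (fun n => ψ n x) (fun n => φb n x')
  have hB_nonpos {M : ℤ} (hM : M ≤ 0) : B M = 0 :=
    christoffelDarbouxBoundary_eq_zero_of_nonpos _ _ _ _ _ hγneg hβsemi hM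
  rcases le_total N 0 with hN | hN
  · rw [Icc_eq_empty (by omega), sum_empty]
    exact (hB_nonpos hN).symm
  · calc _ = ∑ n ∈ Ico 0 N, (B (n + 1) - B n) := by
          rw [Icc_sub_one_right_eq_Ico]
          exact sum_congr rfl fun n hn => leibniz_term_eq_christoffelDarbouxBoundary_sub d1 β γ
            (fun n => ψ n x) (fun n => φb n x') (hψ n (mem_Ico.mp hn).1 x)
            (hφb n (mem_Ico.mp hn).1 x') (hβγ n)
      _ = B N := by rw [Int.sum_Ico_sub B hN, hB_nonpos le_rfl, sub_zero]

/-- Differential generalized Christoffel–Darboux relation for the kernel `K₁₁`. -/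
theorem christoffel_darboux_diff_K11
    (d1 d2 : ℕ) (hd1 : 1 ≤ d1) (hd2 : 1 ≤ d2)
    (α β : ℤ → ℤ → ℂ) (γ : ℤ → ℂ)
    (hαsupp : ∀ j n : ℤ, (j < -1 ∨ (d2 : ℤ) < j) → α j n = 0)
    (hβsupp : ∀ j n : ℤ, (j < -1 ∨ (d1 : ℤ) < j) → β j n = 0)
    (hαγ : ∀ n : ℤ, α (-1) n = γ n)
    (hβγ : ∀ n : ℤ, β (-1) n = γ n)
    (hαsemi : ∀ j n : ℤ, n < j → α j n = 0)
    (hβsemi : ∀ j n : ℤ, n < j → β j n = 0)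
    (hαneg : ∀ j n : ℤ, n < 0 → α j n = 0)
    (hβneg : ∀ j n : ℤ, n < 0 → β j n = 0)
    (hγneg : ∀ n : ℤ, n < 0 → γ n = 0)
    (ψ φb : ℤ → ℂ → ℂ)
    (hψdiff : ∀ n : ℤ, Differentiable ℂ (ψ n))
    (hφbdiff : ∀ n : ℤ, Differentiable ℂ (φb n))
    (hψ : ∀ n : ℤ, 0 ≤ n → ∀ x : ℂ,
      deriv (ψ n) x = -(γ (n - 1) * ψ (n - 1) x) -
        ∑ j ∈ Finset.Icc (0 : ℤ) (d1 : ℤ), β j (n + j) * ψ (n + j) x)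
    (hφb : ∀ n : ℤ, 0 ≤ n → ∀ x' : ℂ,
      deriv (φb n) x' = ∑ j ∈ Finset.Icc (-1 : ℤ) (d1 : ℤ), β j n * φb (n - j) x')
    (N : ℤ) (hN : 1 ≤ N) (x x' : ℂ) :
    ∑ n ∈ Finset.Icc (0 : ℤ) (N - 1),
        (deriv (ψ n) x * φb n x' + ψ n x * deriv (φb n) x') =
      γ (N - 1) * φb N x' * ψ (N - 1) x -
        ∑ j ∈ Finset.Icc (1 : ℤ) (d1 : ℤ), ∑ k ∈ Finset.Icc (0 : ℤ) (j - 1),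
          β j (N + k) * φb (N + k - j) x' * ψ (N + k) x :=
  christoffel_darboux_diff_K11_general d1 β γ hβγ hβsemi hγneg ψ φb hψ hφb N x x'
end

section
/- Let x ∈ ℂ, let ψ : ℤ → ℂ be a sequence satisfying x·ψ_n = Σ_{j=−1}^{d2} α_j(n)·ψ_{n−j} for all n ≥ 0, and let φ_n : ℂ → ℂ (n ∈ ℤ) be differentiable functions satisfying φ_n′(y) = −γ(n−1)·φ_{n−1}(y) − Σ_{j=0}^{d2} α_j(n+j)·φ_{n+j}(y) for all n ≥ 0 and all y ∈ ℂ. Then for every N ≥ 1 and all y ∈ ℂ, with K(y) := Σ_{n=0}^{N−1} ψ_n·φ_n(y): x·K(y) + K′(y) = γ(N−1)·ψ_N·φ_{N−1}(y) − Σ_{j=1}^{d2} Σ_{k=0}^{j−1} α_j(N+k)·φ_{N+k}(y)·ψ_{N+k−j}. (Generalized Christoffel–Darboux relation for the kernel K_{12}.) -/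
open BigOperators

lemma cd_tele_aux (g : ℤ → ℂ) (M : ℤ) (hM : 1 ≤ M) :
    ∑ n ∈ Finset.Icc (0 : ℤ) (M - 1), (g (n + 1) - g n) = g M - g 0 := by
  refine Int.le_induction
    (motive := fun M _ => ∑ n ∈ Finset.Icc (0 : ℤ) (M - 1), (g (n + 1) - g n) = g M - g 0)
    ?_ ?_ M hM
  · norm_num
  · intro M hM ih
    have hset : Finset.Icc (0 : ℤ) (M + 1 - 1) = insert M (Finset.Icc 0 (M - 1)) := by
      ext k
      simp only [Finset.mem_Icc, Finset.mem_insert]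
      omega
    rw [hset, Finset.sum_insert (by simp [Finset.mem_Icc]), ih]
    ring

/-- Generalized Christoffel–Darboux relation for the kernel `K₁₂`. -/
theorem christoffel_darboux_K12
    (d1 d2 : ℕ) (hd1 : 1 ≤ d1) (hd2 : 1 ≤ d2)
    (α β : ℤ → ℤ → ℂ) (γ : ℤ → ℂ)
    (hαsupp : ∀ j n : ℤ, (j < -1 ∨ (d2 : ℤ) < j) → α j n = 0)
    (hβsupp : ∀ j n : ℤ, (j < -1 ∨ (d1 : ℤ) < j) → β j n = 0)
    (hαγ : ∀ n : ℤ, α (-1) n = γ n)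
    (hβγ : ∀ n : ℤ, β (-1) n = γ n)
    (hαsemi : ∀ j n : ℤ, n < j → α j n = 0)
    (hβsemi : ∀ j n : ℤ, n < j → β j n = 0)
    (hαneg : ∀ j n : ℤ, n < 0 → α j n = 0)
    (hβneg : ∀ j n : ℤ, n < 0 → β j n = 0)
    (hγneg : ∀ n : ℤ, n < 0 → γ n = 0)
    (x : ℂ) (ψ : ℤ → ℂ) (φ : ℤ → ℂ → ℂ)
    (hψ : ∀ n : ℤ, 0 ≤ n →
      x * ψ n = ∑ j ∈ Finset.Icc (-1 : ℤ) (d2 : ℤ), α j n * ψ (n - j))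
    (hφdiff : ∀ n : ℤ, Differentiable ℂ (φ n))
    (hφ : ∀ n : ℤ, 0 ≤ n → ∀ y : ℂ,
      deriv (φ n) y = -(γ (n - 1) * φ (n - 1) y) -
        ∑ j ∈ Finset.Icc (0 : ℤ) (d2 : ℤ), α j (n + j) * φ (n + j) y)
    (N : ℤ) (hN : 1 ≤ N) (y : ℂ) :
    x * (∑ n ∈ Finset.Icc (0 : ℤ) (N - 1), ψ n * φ n y) +
        deriv (fun z => ∑ n ∈ Finset.Icc (0 : ℤ) (N - 1), ψ n * φ n z) y =
      γ (N - 1) * ψ N * φ (N - 1) y -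
        ∑ j ∈ Finset.Icc (1 : ℤ) (d2 : ℤ), ∑ k ∈ Finset.Icc (0 : ℤ) (j - 1),
          α j (N + k) * φ (N + k) y * ψ (N + k - j) := by
  classical
  set S := Finset.Icc (0 : ℤ) (N - 1) with hS
  -- derivative of the finite sum
  have hderiv : deriv (fun z => ∑ n ∈ S, ψ n * φ n z) y
      = ∑ n ∈ S, ψ n * deriv (φ n) y := by
    have h : HasDerivAt (fun z => ∑ n ∈ S, ψ n * φ n z)
        (∑ n ∈ S, ψ n * deriv (φ n) y) y :=
      HasDerivAt.fun_sum fun n _ => ((hφdiff n y).hasDerivAt).const_mul (ψ n)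
    exact h.deriv
  rw [hderiv, Finset.mul_sum, ← Finset.sum_add_distrib]
  -- rewrite each summand
  have hins : Finset.Icc (-1 : ℤ) (d2 : ℤ) = insert (-1) (Finset.Icc 0 (d2 : ℤ)) := by
    ext k
    simp only [Finset.mem_Icc, Finset.mem_insert]
    omega
  have hsummand : ∀ n ∈ S,
      x * (ψ n * φ n y) + ψ n * deriv (φ n) y
        = (γ n * ψ (n + 1) * φ n y - γ (n - 1) * ψ n * φ (n - 1) y)
          + ∑ j ∈ Finset.Icc (0 : ℤ) (d2 : ℤ),
              (α j n * ψ (n - j) * φ n y - α j (n + j) * ψ n * φ (n + j) y) := by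
    intro n hn
    have hn0 : 0 ≤ n := (Finset.mem_Icc.mp hn).1
    have e1 : x * (ψ n * φ n y)
        = γ n * ψ (n + 1) * φ n y
          + ∑ j ∈ Finset.Icc (0 : ℤ) (d2 : ℤ), α j n * ψ (n - j) * φ n y := by
      have : x * (ψ n * φ n y) = (x * ψ n) * φ n y := by ring
      rw [this, hψ n hn0, hins, Finset.sum_insert (by simp), add_mul, Finset.sum_mul]
      rw [hαγ]
      norm_num
    have e2 : ψ n * deriv (φ n) y
        = - (γ (n - 1) * ψ n * φ (n - 1) y)
          - ∑ j ∈ Finset.Icc (0 : ℤ) (d2 : ℤ), α j (n + j) * ψ n * φ (n + j) y := by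
      rw [hφ n hn0 y, mul_sub, Finset.mul_sum]
      rw [Finset.sum_congr rfl (fun j _ => by ring :
        ∀ j ∈ Finset.Icc (0 : ℤ) (d2 : ℤ),
          ψ n * (α j (n + j) * φ (n + j) y) = α j (n + j) * ψ n * φ (n + j) y)]
      ring
    rw [e1, e2, Finset.sum_sub_distrib]
    ring
  rw [Finset.sum_congr rfl hsummand, Finset.sum_add_distrib]
  -- telescoping part
  have hT : ∑ n ∈ S, (γ n * ψ (n + 1) * φ n y - γ (n - 1) * ψ n * φ (n - 1) y)
      = γ (N - 1) * ψ N * φ (N - 1) y := by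
    have := cd_tele_aux (fun n => γ (n - 1) * ψ n * φ (n - 1) y) N hN
    simp only [add_sub_cancel_right] at this
    rw [hS, this, hγneg (0 - 1) (by norm_num)]
    ring
  -- double-sum part
  have hj : ∀ j ∈ Finset.Icc (0 : ℤ) (d2 : ℤ),
      ∑ n ∈ S, (α j n * ψ (n - j) * φ n y - α j (n + j) * ψ n * φ (n + j) y)
        = -∑ k ∈ Finset.Icc (0 : ℤ) (j - 1), α j (N + k) * φ (N + k) y * ψ (N + k - j) := by
    intro j hjm
    have hj0 : 0 ≤ j := (Finset.mem_Icc.mp hjm).1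
    set f : ℤ → ℂ := fun m => α j m * ψ (m - j) * φ m y with hf
    have h1 : ∑ n ∈ S, α j (n + j) * ψ n * φ (n + j) y
        = ∑ m ∈ Finset.Icc j (N - 1 + j), f m := by
      rw [show Finset.Icc j (N - 1 + j)
            = (Finset.Icc (0 : ℤ) (N - 1)).map (addRightEmbedding j) by
          rw [Finset.map_add_right_Icc]; norm_num, Finset.sum_map]
      apply Finset.sum_congr rfl
      intro n _
      simp only [hf, addRightEmbedding_apply, add_sub_cancel_right]
    have h2 : ∑ m ∈ Finset.Icc j (N - 1 + j), f m
        = ∑ m ∈ Finset.Icc 0 (N - 1 + j), f m := by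
      apply Finset.sum_subset
      · intro m hm
        simp only [Finset.mem_Icc] at *
        omega
      · intro m hm hm2
        simp only [Finset.mem_Icc] at hm hm2
        have hz : α j m = 0 := hαsemi j m (by omega)
        simp [hf, hz]
    have h3 : ∑ m ∈ Finset.Icc (0 : ℤ) (N - 1 + j), f m
        = ∑ m ∈ S, f m + ∑ m ∈ Finset.Icc N (N - 1 + j), f m := by
      rw [← Finset.sum_union]
      · apply Finset.sum_congr _ (fun _ _ => rfl)
        ext m
        simp only [Finset.mem_Icc, Finset.mem_union, hS]
        omega
      · rw [Finset.disjoint_left]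
        intro m hm hm2
        simp only [Finset.mem_Icc, hS] at hm hm2
        omega
    have h4 : ∑ m ∈ Finset.Icc N (N - 1 + j), f m
        = ∑ k ∈ Finset.Icc (0 : ℤ) (j - 1), α j (N + k) * φ (N + k) y * ψ (N + k - j) := by
      rw [show Finset.Icc N (N - 1 + j)
            = (Finset.Icc (0 : ℤ) (j - 1)).map (addLeftEmbedding N) by
          rw [Finset.map_add_left_Icc]; ring_nf, Finset.sum_map]
      apply Finset.sum_congr rfl
      intro k _
      simp only [hf, addLeftEmbedding_apply]
      ring_nf
    rw [Finset.sum_sub_distrib, h1, h2, h3, h4]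
    have : ∑ n ∈ S, α j n * ψ (n - j) * φ n y = ∑ m ∈ S, f m := rfl
    rw [this]
    ring
  rw [Finset.sum_comm, hT, Finset.sum_congr rfl hj]
  -- drop the j = 0 term
  have hdrop : ∑ j ∈ Finset.Icc (0 : ℤ) (d2 : ℤ),
      (-∑ k ∈ Finset.Icc (0 : ℤ) (j - 1), α j (N + k) * φ (N + k) y * ψ (N + k - j))
      = ∑ j ∈ Finset.Icc (1 : ℤ) (d2 : ℤ),
      (-∑ k ∈ Finset.Icc (0 : ℤ) (j - 1), α j (N + k) * φ (N + k) y * ψ (N + k - j)) := by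
    symm
    apply Finset.sum_subset
    · intro m hm
      simp only [Finset.mem_Icc] at *
      omega
    · intro m hm hm2
      simp only [Finset.mem_Icc] at hm hm2
      have : Finset.Icc (0 : ℤ) (m - 1) = ∅ := by
        apply Finset.Icc_eq_empty
        omega
      simp [this]
  rw [hdrop, Finset.sum_neg_distrib]
  ring
end

section
/- Let y′ ∈ ℂ, let ψ̄ : ℤ → ℂ be a sequence satisfying y′·ψ̄_n = Σ_{j=−1}^{d1} β_j(n+j)·ψ̄_{n+j} for all n ≥ 0, and let φ̄_n : ℂ → ℂ (n ∈ ℤ) be differentiable functions satisfying φ̄_n′(x′) = Σ_{j=−1}^{d1} β_j(n)·φ̄_{n−j}(x′) for all n ≥ 0 and all x′ ∈ ℂ. Then for every N ≥ 1 and all x′ ∈ ℂ, with K(x′) := Σ_{n=0}^{N−1} ψ̄_n·φ̄_n(x′): y′·K(x′) − K′(x′) = −γ(N−1)·ψ̄_{N−1}·φ̄_N(x′) + Σ_{j=1}^{d1} Σ_{k=0}^{j−1} β_j(N+k)·ψ̄_{N+k}·φ̄_{N+k−j}(x′). (Generalized Christoffel–Darboux relation for the kernel K_{21}.) -/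
/-!
Put `F j m := β j m · ψ̄ m · φ̄ (m - j) x'`. The two recurrences turn the `n`-th summand of
`y' K - K'` into `∑ j, (F j (n + j) - F j n)`, so after exchanging the sums each shift `j`
contributes a telescoping sum over `0 ≤ n < N`. For `j ≥ 0` it leaves the `j` terms above `N`
minus the `j` terms starting at `0`, and the latter vanish by the semi-infinite convention; for
`j = -1` it leaves `F (-1) (-1) - F (-1) (N - 1) = -γ (N - 1) ψ̄ (N - 1) φ̄ N x'`.
-/

open Finset

theorem sum_Ico_consecutive' {α M : Type*} [LinearOrder α] [LocallyFiniteOrder α]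
    [AddCommMonoid M] (f : α → M) {a b c : α} (hab : a ≤ b) (hbc : b ≤ c) :
    ∑ i ∈ Ico a b, f i + ∑ i ∈ Ico b c, f i = ∑ i ∈ Ico a c, f i :=
  Ico_union_Ico_eq_Ico hab hbc ▸ (sum_union (Ico_disjoint_Ico_consecutive a b c)).symm

theorem sum_Ico_add_sub_sum_Ico {M : Type*} [AddCommGroup M] (f : ℤ → M) {a b j : ℤ}
    (hab : a ≤ b) (hj : 0 ≤ j) :
    ∑ n ∈ Ico a b, (f (n + j) - f n) =
      ∑ k ∈ Ico 0 j, f (b + k) - ∑ k ∈ Ico 0 j, f (a + k) := by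
  have hleft := sum_Ico_consecutive' f hab (by omega : b ≤ b + j)
  have hright := sum_Ico_consecutive' f (by omega : a ≤ a + j) (by omega : a + j ≤ b + j)
  rw [sum_sub_distrib, sum_Ico_add', sum_Ico_add, sum_Ico_add, zero_add, zero_add, add_comm j a,
    add_comm j b, sub_eq_sub_iff_add_eq_add, add_comm, hright, ← hleft, add_comm]

theorem sum_Ico_sub_one_sub {M : Type*} [AddCommGroup M] (f : ℤ → M) {a b : ℤ} (hab : a ≤ b) :
    ∑ n ∈ Ico a b, (f (n - 1) - f n) = f (a - 1) - f (b - 1) := by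
  have h := sum_Ico_add_sub_sum_Ico (fun n => f (n - 1)) hab zero_le_one
  rw [show Ico (0 : ℤ) 1 = {0} from rfl] at h
  simp only [add_sub_cancel_right, sum_singleton, add_zero] at h
  rw [← neg_sub, ← h, ← sum_neg_distrib]
  simp

theorem deriv_sum_const_mul {ι 𝕜 : Type*} [NontriviallyNormedField 𝕜] (s : Finset ι)
    (c : ι → 𝕜) {f : ι → 𝕜 → 𝕜} {x : 𝕜} (hf : ∀ i ∈ s, DifferentiableAt 𝕜 (f i) x) :
    deriv (fun z => ∑ i ∈ s, c i * f i z) x = ∑ i ∈ s, c i * deriv (f i) x := by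
  rw [deriv_fun_sum fun i hi => (hf i hi).const_mul (c i)]
  exact sum_congr rfl fun i hi => deriv_const_mul _ (hf i hi)

theorem christoffel_darboux_K21_general
    (d1 : ℕ)
    (β : ℤ → ℤ → ℂ) (γ : ℤ → ℂ)
    (hβγ : ∀ n : ℤ, β (-1) n = γ n)
    (hβsemi : ∀ j n : ℤ, n < j → β j n = 0)
    (hβneg : ∀ j n : ℤ, n < 0 → β j n = 0)
    (y' : ℂ) (ψb : ℤ → ℂ) (φb : ℤ → ℂ → ℂ)
    (hψb : ∀ n : ℤ, 0 ≤ n →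
      y' * ψb n = ∑ j ∈ Finset.Icc (-1 : ℤ) (d1 : ℤ), β j (n + j) * ψb (n + j))
    (hφbdiff : ∀ n : ℤ, Differentiable ℂ (φb n))
    (hφb : ∀ n : ℤ, 0 ≤ n → ∀ x' : ℂ,
      deriv (φb n) x' = ∑ j ∈ Finset.Icc (-1 : ℤ) (d1 : ℤ), β j n * φb (n - j) x')
    (N : ℤ) (hN : 1 ≤ N) (x' : ℂ) :
    y' * (∑ n ∈ Finset.Icc (0 : ℤ) (N - 1), ψb n * φb n x') -
        deriv (fun z => ∑ n ∈ Finset.Icc (0 : ℤ) (N - 1), ψb n * φb n z) x' =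
      -(γ (N - 1) * ψb (N - 1) * φb N x') +
        ∑ j ∈ Finset.Icc (1 : ℤ) (d1 : ℤ), ∑ k ∈ Finset.Icc (0 : ℤ) (j - 1),
          β j (N + k) * ψb (N + k) * φb (N + k - j) x' := by
  set F : ℤ → ℤ → ℂ := fun j m => β j m * ψb m * φb (m - j) x'
  have hterm : ∀ n ∈ Icc (0 : ℤ) (N - 1),
      y' * (ψb n * φb n x') - ψb n * deriv (φb n) x' =
        ∑ j ∈ Icc (-1 : ℤ) d1, (F j (n + j) - F j n) := by
    intro n hn
    have hn0 : 0 ≤ n := (mem_Icc.1 hn).1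
    rw [← mul_assoc, hψb n hn0, hφb n hn0, sum_mul, mul_sum, ← sum_sub_distrib]
    refine sum_congr rfl fun j _ => ?_
    simp only [F, add_sub_cancel_right]
    ring
  have hshift : ∀ j ∈ Icc (0 : ℤ) d1,
      ∑ n ∈ Ico 0 N, (F j (n + j) - F j n) = ∑ k ∈ Icc 0 (j - 1), F j (N + k) := by
    intro j hj
    have hbelow : ∑ k ∈ Ico 0 j, F j (0 + k) = 0 :=
      sum_eq_zero fun k hk => by simp [F, hβsemi j k (mem_Ico.1 hk).2]
    rw [sum_Ico_add_sub_sum_Ico _ (by omega) (mem_Icc.1 hj).1, hbelow, sub_zero,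
      Icc_sub_one_right_eq_Ico]
  have hback : ∑ n ∈ Ico 0 N, (F (-1) (n + -1) - F (-1) n) =
      -(γ (N - 1) * ψb (N - 1) * φb N x') := by
    simp only [← sub_eq_add_neg]
    rw [sum_Ico_sub_one_sub _ (by omega)]
    simp only [F, hβneg _ (0 - 1) (by norm_num), hβγ, sub_neg_eq_add, sub_add_cancel]
    ring
  rw [deriv_sum_const_mul _ _ fun n _ => (hφbdiff n).differentiableAt, mul_sum,
    ← sum_sub_distrib, sum_congr rfl hterm, sum_comm]
  rw [← insert_Icc_add_one_left_eq_Icc (by omega), sum_insert (by simp), neg_add_cancel,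
    Icc_sub_one_right_eq_Ico, hback, sum_congr rfl hshift]
  rw [← insert_Icc_add_one_left_eq_Icc (by omega), sum_insert (by simp), zero_add, zero_sub,
    Icc_eq_empty (by omega), sum_empty, zero_add]

/-- Generalized Christoffel–Darboux relation for the kernel `K₂₁`. -/
theorem christoffel_darboux_K21
    (d1 d2 : ℕ) (hd1 : 1 ≤ d1) (hd2 : 1 ≤ d2)
    (α β : ℤ → ℤ → ℂ) (γ : ℤ → ℂ)
    (hαsupp : ∀ j n : ℤ, (j < -1 ∨ (d2 : ℤ) < j) → α j n = 0)
    (hβsupp : ∀ j n : ℤ, (j < -1 ∨ (d1 : ℤ) < j) → β j n = 0)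
    (hαγ : ∀ n : ℤ, α (-1) n = γ n)
    (hβγ : ∀ n : ℤ, β (-1) n = γ n)
    (hαsemi : ∀ j n : ℤ, n < j → α j n = 0)
    (hβsemi : ∀ j n : ℤ, n < j → β j n = 0)
    (hαneg : ∀ j n : ℤ, n < 0 → α j n = 0)
    (hβneg : ∀ j n : ℤ, n < 0 → β j n = 0)
    (hγneg : ∀ n : ℤ, n < 0 → γ n = 0)
    (y' : ℂ) (ψb : ℤ → ℂ) (φb : ℤ → ℂ → ℂ)
    (hψb : ∀ n : ℤ, 0 ≤ n →
      y' * ψb n = ∑ j ∈ Finset.Icc (-1 : ℤ) (d1 : ℤ), β j (n + j) * ψb (n + j))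
    (hφbdiff : ∀ n : ℤ, Differentiable ℂ (φb n))
    (hφb : ∀ n : ℤ, 0 ≤ n → ∀ x' : ℂ,
      deriv (φb n) x' = ∑ j ∈ Finset.Icc (-1 : ℤ) (d1 : ℤ), β j n * φb (n - j) x')
    (N : ℤ) (hN : 1 ≤ N) (x' : ℂ) :
    y' * (∑ n ∈ Finset.Icc (0 : ℤ) (N - 1), ψb n * φb n x') -
        deriv (fun z => ∑ n ∈ Finset.Icc (0 : ℤ) (N - 1), ψb n * φb n z) x' =
      -(γ (N - 1) * ψb (N - 1) * φb N x') +
        ∑ j ∈ Finset.Icc (1 : ℤ) (d1 : ℤ), ∑ k ∈ Finset.Icc (0 : ℤ) (j - 1),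
          β j (N + k) * ψb (N + k) * φb (N + k - j) x' :=
  christoffel_darboux_K21_general d1 β γ hβγ hβsemi hβneg y' ψb φb hψb hφbdiff hφb N hN x'
end

section
/- Assume γ(n) ≠ 0 and α_{d2}(n) ≠ 0 for all n ∈ ℤ. Let ψ_n : ℂ → ℂ (n ∈ ℤ) be differentiable functions satisfying, for all n ∈ ℤ and all x ∈ ℂ: x·ψ_n(x) = Σ_{j=−1}^{d2} α_j(n)·ψ_{n−j}(x) and ψ_n′(x) = −γ(n−1)·ψ_{n−1}(x) − Σ_{j=0}^{d1} β_j(n+j)·ψ_{n+j}(x). Then for every N ∈ ℤ the window column vector Ψ_N(x) := (ψ_{N−d2}(x), …, ψ_N(x))ᵗ satisfies the closed first-order linear differential system Ψ_N′(x) = −D1_N(x)·Ψ_N(x) for all x ∈ ℂ. -/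
open Matrix BigOperators

noncomputable def aMat (d2 : ℕ) (α : ℤ → ℤ → ℂ) (γ : ℤ → ℂ) (N : ℤ) (x : ℂ) :
    Matrix (Fin (d2 + 1)) (Fin (d2 + 1)) ℂ :=
  Matrix.of fun i b =>
    if (i : ℕ) < d2 then (if (b : ℕ) = (i : ℕ) + 1 then 1 else 0)
    else if (b : ℕ) = d2 then (x - α 0 N) / γ N
    else -α ((d2 : ℤ) - ((b : ℕ) : ℤ)) N / γ N

noncomputable def aProd (d2 : ℕ) (α : ℤ → ℤ → ℂ) (γ : ℤ → ℂ) (N : ℤ) (x : ℂ) :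
    ℕ → Matrix (Fin (d2 + 1)) (Fin (d2 + 1)) ℂ
  | 0 => 1
  | j + 1 => aMat d2 α γ (N + (j : ℤ)) x * aProd d2 α γ N x j

noncomputable def D1Mat (d1 d2 : ℕ) (α β : ℤ → ℤ → ℂ) (γ : ℤ → ℂ) (N : ℤ) (x : ℂ) :
    Matrix (Fin (d2 + 1)) (Fin (d2 + 1)) ℂ :=
  Matrix.diagonal (fun i : Fin _ => γ (N - (d2 : ℤ) - 1 + ((i : ℕ) : ℤ))) * (aMat d2 α γ (N - 1) x)⁻¹
    + Matrix.diagonal (fun i : Fin _ => β 0 (N - (d2 : ℤ) + ((i : ℕ) : ℤ)))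
    + ∑ j ∈ Finset.Icc 1 d1,
        Matrix.diagonal (fun i : Fin _ => β (j : ℤ) (N + (j : ℤ) - (d2 : ℤ) + ((i : ℕ) : ℤ)))
          * aProd d2 α γ N x j


lemma sumIccIntFin (m : ℕ) (f : ℤ → ℂ) :
    ∑ j ∈ Finset.Icc (0:ℤ) (m:ℤ), f j = ∑ i : Fin (m+1), f ((i:ℕ):ℤ) := by
  rw [show Finset.Icc (0:ℤ) (m:ℤ) = Finset.map ⟨Nat.cast, Nat.cast_injective⟩ (Finset.range (m+1)) from ?_,
    Finset.sum_map]
  · rw [Fin.sum_univ_eq_sum_range (fun i => f ((i:ℕ):ℤ)) (m+1)]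
    rfl
  · ext j
    simp only [Finset.mem_Icc, Finset.mem_map, Finset.mem_range, Function.Embedding.coeFn_mk]
    constructor
    · rintro ⟨h0, h1⟩; exact ⟨j.toNat, by omega, by omega⟩
    · rintro ⟨n, hn, rfl⟩; omega

lemma sumIcc1IntNat (m : ℕ) (f : ℤ → ℂ) :
    ∑ j ∈ Finset.Icc (1:ℤ) (m:ℤ), f j = ∑ j ∈ Finset.Icc 1 m, f ((j:ℕ):ℤ) := by
  rw [show Finset.Icc (1:ℤ) (m:ℤ) = Finset.map ⟨Nat.cast, Nat.cast_injective⟩ (Finset.Icc 1 m) from ?_,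
    Finset.sum_map]
  · rfl
  · ext j
    simp only [Finset.mem_Icc, Finset.mem_map, Function.Embedding.coeFn_mk]
    constructor
    · rintro ⟨h0, h1⟩; exact ⟨j.toNat, by omega, by omega⟩
    · rintro ⟨n, hn, rfl⟩; omega

lemma aMat_mulVec (d2 : ℕ) (α : ℤ → ℤ → ℂ) (γ : ℤ → ℂ) (hγ : ∀ n, γ n ≠ 0)
    (hαγ : ∀ n, α (-1) n = γ n)
    (ψ : ℤ → ℂ → ℂ)
    (hrec : ∀ n x, x * ψ n x = ∑ j ∈ Finset.Icc (-1:ℤ) (d2:ℤ), α j n * ψ (n-j) x)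
    (M : ℤ) (x : ℂ) :
    (aMat d2 α γ M x).mulVec (fun i : Fin (d2+1) => ψ (M - (d2:ℤ) + ((i:ℕ):ℤ)) x)
      = fun i : Fin (d2+1) => ψ (M + 1 - (d2:ℤ) + ((i:ℕ):ℤ)) x := by
  funext i
  simp only [Matrix.mulVec, dotProduct, aMat, Matrix.of_apply]
  by_cases h : (i:ℕ) < d2
  · simp only [if_pos h]
    rw [Finset.sum_eq_single (⟨(i:ℕ)+1, by omega⟩ : Fin (d2+1))]
    · simp only [if_pos rfl, one_mul]
      congr 1
      push_cast
      ring
    · intro b _ hb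
      have hb' : ¬((b:ℕ) = (i:ℕ)+1) := fun hc => hb (Fin.ext hc)
      simp [hb']
    · intro hmem; exact absurd (Finset.mem_univ _) hmem
  · have hi : (i:ℕ) = d2 := by omega
    simp only [hi, if_neg (lt_irrefl d2)]
    have harg : M + 1 - (d2:ℤ) + (d2:ℤ) = M + 1 := by ring
    rw [harg]
    -- multiply by γ M
    apply mul_left_cancel₀ (hγ M)
    have hterm : ∀ b : Fin (d2+1),
        γ M * ((if (b:ℕ) = d2 then (x - α 0 M) / γ M
            else -α ((d2:ℤ) - ((b:ℕ):ℤ)) M / γ M) * ψ (M - (d2:ℤ) + ((b:ℕ):ℤ)) x)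
        = (if (b:ℕ) = d2 then x * ψ (M - (d2:ℤ) + ((b:ℕ):ℤ)) x else 0)
            - α ((d2:ℤ) - ((b:ℕ):ℤ)) M * ψ (M - (d2:ℤ) + ((b:ℕ):ℤ)) x := by
      intro b
      by_cases hb : (b:ℕ) = d2
      · simp only [if_pos hb, hb, sub_self, ↓reduceIte]
        field_simp [hγ M]
      · simp only [if_neg hb]
        field_simp [hγ M]
        ring
    rw [Finset.mul_sum]
    simp_rw [hterm]
    rw [Finset.sum_sub_distrib]
    have hfirst : ∑ b : Fin (d2+1), (if (b:ℕ) = d2 then x * ψ (M - (d2:ℤ) + ((b:ℕ):ℤ)) x else 0)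
        = x * ψ M x := by
      rw [Finset.sum_eq_single (Fin.last d2)]
      · simp only [Fin.val_last, if_pos rfl]
        congr 2
        push_cast
        ring
      · intro b _ hb
        have hb' : ¬((b:ℕ) = d2) := fun hc => hb (Fin.ext hc)
        simp [hb']
      · intro hmem; exact absurd (Finset.mem_univ _) hmem
    rw [hfirst]
    have hrev : ∑ b : Fin (d2+1), α ((d2:ℤ) - ((b:ℕ):ℤ)) M * ψ (M - (d2:ℤ) + ((b:ℕ):ℤ)) x
        = ∑ b : Fin (d2+1), α ((b:ℕ):ℤ) M * ψ (M - ((b:ℕ):ℤ)) x := by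
      apply Fintype.sum_bijective Fin.rev Fin.rev_bijective
      intro b
      have hb : ((Fin.rev b : Fin (d2+1)) : ℕ) = d2 - (b:ℕ) := by
        rw [Fin.val_rev]
        omega
      rw [hb]
      have h1 : ((d2 - (b:ℕ) : ℕ) : ℤ) = (d2:ℤ) - ((b:ℕ):ℤ) := by
        have := b.isLt; omega
      rw [h1]
      congr 2
      ring
    rw [hrev]
    have hins : Finset.Icc (-1:ℤ) (d2:ℤ) = insert (-1:ℤ) (Finset.Icc (0:ℤ) (d2:ℤ)) := by
      ext j
      simp only [Finset.mem_Icc, Finset.mem_insert]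
      omega
    have key := hrec M x
    rw [hins, Finset.sum_insert (by simp), hαγ, sumIccIntFin d2
      (fun j => α j M * ψ (M - j) x)] at key
    have : M - (-1) = M + 1 := by ring
    rw [this] at key
    linear_combination key

noncomputable def bMat (d2 : ℕ) (α : ℤ → ℤ → ℂ) (γ : ℤ → ℂ) (M : ℤ) (x : ℂ) :
    Matrix (Fin (d2 + 1)) (Fin (d2 + 1)) ℂ :=
  Matrix.of fun i c =>
    if (i : ℕ) = 0 then
      (if (c : ℕ) = d2 then -(γ M / α (d2:ℤ) M)
       else if (c : ℕ) + 1 = d2 then (x - α 0 M) / α (d2:ℤ) M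
       else -(α ((d2:ℤ) - ((c:ℕ):ℤ) - 1) M / α (d2:ℤ) M))
    else if (c : ℕ) + 1 = (i : ℕ) then 1 else 0

lemma aMat_mul_bMat (d2 : ℕ) (hd2 : 1 ≤ d2) (α : ℤ → ℤ → ℂ) (γ : ℤ → ℂ)
    (hγ : ∀ n, γ n ≠ 0) (hαd2 : ∀ n, α (d2:ℤ) n ≠ 0) (M : ℤ) (x : ℂ) :
    aMat d2 α γ M x * bMat d2 α γ M x = 1 := by
  ext i c
  rw [Matrix.mul_apply]
  by_cases h : (i:ℕ) < d2
  · -- row i < d2 picks out b = i+1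
    have : ∀ b : Fin (d2+1), aMat d2 α γ M x i b * bMat d2 α γ M x b c
        = if (b:ℕ) = (i:ℕ)+1 then bMat d2 α γ M x b c else 0 := by
      intro b
      simp only [aMat, Matrix.of_apply, if_pos h]
      by_cases hb : (b:ℕ) = (i:ℕ)+1 <;> simp [hb]
    simp_rw [this]
    rw [Finset.sum_eq_single (⟨(i:ℕ)+1, by omega⟩ : Fin (d2+1))]
    · simp only [if_pos rfl, bMat, Matrix.of_apply]
      have h1 : ¬(((⟨(i:ℕ)+1, by omega⟩ : Fin (d2+1)) : ℕ) = 0) := by simp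
      rw [if_neg h1, Matrix.one_apply]
      by_cases hic : i = c
      · simp [hic]
      · have hic' : ¬((c:ℕ)+1 = (i:ℕ)+1) := fun hh => hic (Fin.ext (by omega))
        simp [hic, hic']
        exact fun hh => hic (Fin.ext hh.symm)
    · intro b _ hb
      have hb' : ¬((b:ℕ) = (i:ℕ)+1) := fun hcon => hb (Fin.ext hcon)
      rw [if_neg hb']
    · intro hmem; exact absurd (Finset.mem_univ _) hmem
  · have hi : (i:ℕ) = d2 := by omega
    -- split the sum at b = 0
    rw [Fin.sum_univ_succ]
    have hA0 : aMat d2 α γ M x i 0 = -α (d2:ℤ) M / γ M := by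
      simp only [aMat, Matrix.of_apply, if_neg h]
      rw [if_neg (by simp; omega)]
      simp
    have hAsucc : ∀ b : Fin d2, aMat d2 α γ M x i b.succ
        = if ((b:ℕ)+1 : ℕ) = d2 then (x - α 0 M) / γ M
          else -α ((d2:ℤ) - ((b:ℕ):ℤ) - 1) M / γ M := by
      intro b
      simp only [aMat, Matrix.of_apply, if_neg h, Fin.val_succ]
      by_cases hb : (b:ℕ)+1 = d2
      · rw [if_pos hb, if_pos hb]
      · rw [if_neg hb, if_neg hb]
        congr 2
        push_cast
        ring
    have hBsucc : ∀ b : Fin d2, bMat d2 α γ M x b.succ c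
        = if (c:ℕ) = (b:ℕ) then 1 else 0 := by
      intro b
      simp only [bMat, Matrix.of_apply, Fin.val_succ]
      rw [if_neg (by omega)]
      by_cases hc : (c:ℕ) = (b:ℕ)
      · rw [if_pos (by omega), if_pos hc]
      · rw [if_neg (by omega), if_neg hc]
    have hB0 : bMat d2 α γ M x 0 c =
      (if (c : ℕ) = d2 then -(γ M / α (d2:ℤ) M)
       else if (c : ℕ) + 1 = d2 then (x - α 0 M) / α (d2:ℤ) M
       else -(α ((d2:ℤ) - ((c:ℕ):ℤ) - 1) M / α (d2:ℤ) M)) := by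
      simp only [bMat, Matrix.of_apply]
      rw [if_pos (by simp)]
    by_cases hc : (c:ℕ) = d2
    · -- diagonal entry: should be 1
      have hone : (1 : Matrix (Fin (d2+1)) (Fin (d2+1)) ℂ) i c = 1 := by
        rw [Matrix.one_apply, if_pos (by ext; omega : i = c)]
      rw [hone, hA0, hB0, if_pos hc]
      have hzero : ∀ b : Fin d2, aMat d2 α γ M x i b.succ * bMat d2 α γ M x b.succ c = 0 := by
        intro b
        rw [hBsucc]
        rw [if_neg (by omega)]
        simp
      rw [Finset.sum_eq_zero (fun b _ => hzero b), add_zero]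
      field_simp [hγ M, hαd2 M]
    · have hone : (1 : Matrix (Fin (d2+1)) (Fin (d2+1)) ℂ) i c = 0 := by
        rw [Matrix.one_apply, if_neg (by intro hh; rw [hh] at hi; exact hc hi)]
      rw [hone, hA0, hB0, if_neg hc]
      have hcd : (c:ℕ) < d2 := by omega
      have hsum : ∑ b : Fin d2, aMat d2 α γ M x i b.succ * bMat d2 α γ M x b.succ c
          = aMat d2 α γ M x i (⟨(c:ℕ), hcd⟩ : Fin d2).succ := by
        rw [Finset.sum_eq_single (⟨(c:ℕ), hcd⟩ : Fin d2)]
        · rw [hBsucc, if_pos rfl, mul_one]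
        · intro b _ hb
          rw [hBsucc, if_neg (fun hcon => hb (Fin.ext hcon.symm)), mul_zero]
        · intro hmem; exact absurd (Finset.mem_univ _) hmem
      rw [hsum, hAsucc]
      by_cases hc1 : (c:ℕ) + 1 = d2
      · rw [if_pos (by simpa using hc1), if_pos hc1]
        field_simp [hγ M, hαd2 M]
        ring
      · rw [if_neg (by simpa using hc1), if_neg hc1]
        field_simp [hγ M, hαd2 M]
        ring

lemma sumMulVec {n : ℕ} (s : Finset ℕ) (M : ℕ → Matrix (Fin n) (Fin n) ℂ) (v : Fin n → ℂ) :
    (∑ j ∈ s, M j).mulVec v = ∑ j ∈ s, (M j).mulVec v := by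
  ext i
  simp only [Matrix.mulVec, dotProduct, Matrix.sum_apply, Finset.sum_mul,
    Finset.sum_apply]
  rw [Finset.sum_comm]

/-- The window `Ψ_N = (ψ_{N-d2}, …, ψ_N)ᵗ` satisfies the closed differential
system `Ψ_N' = -D1_N · Ψ_N`. -/
theorem window_diff_system_Psi (d1 d2 : ℕ) (hd1 : 1 ≤ d1) (hd2 : 1 ≤ d2)
    (α β : ℤ → ℤ → ℂ) (γ : ℤ → ℂ)
    (hαsupp : ∀ j n : ℤ, (j < -1 ∨ (d2 : ℤ) < j) → α j n = 0)
    (hβsupp : ∀ j n : ℤ, (j < -1 ∨ (d1 : ℤ) < j) → β j n = 0)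
    (hαγ : ∀ n : ℤ, α (-1) n = γ n)
    (hβγ : ∀ n : ℤ, β (-1) n = γ n)
    (hγ : ∀ n : ℤ, γ n ≠ 0) (hαd2 : ∀ n : ℤ, α (d2 : ℤ) n ≠ 0)
    (ψ : ℤ → ℂ → ℂ)
    (hψdiff : ∀ n : ℤ, Differentiable ℂ (ψ n))
    (hrec : ∀ (n : ℤ) (x : ℂ),
      x * ψ n x = ∑ j ∈ Finset.Icc (-1 : ℤ) (d2 : ℤ), α j n * ψ (n - j) x)
    (hder : ∀ (n : ℤ) (x : ℂ),
      deriv (ψ n) x = -(γ (n - 1) * ψ (n - 1) x) -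
        ∑ j ∈ Finset.Icc (0 : ℤ) (d1 : ℤ), β j (n + j) * ψ (n + j) x)
    (N : ℤ) (x : ℂ) :
    (fun i : Fin (d2 + 1) => deriv (ψ (N - (d2 : ℤ) + ((i : ℕ) : ℤ))) x) =
      -(D1Mat d1 d2 α β γ N x).mulVec
        (fun i : Fin (d2 + 1) => ψ (N - (d2 : ℤ) + ((i : ℕ) : ℤ)) x) := by
  have hstep := aMat_mulVec d2 α γ hγ hαγ ψ hrec
  -- products act as shifts
  have hprod : ∀ j : ℕ, (aProd d2 α γ N x j).mulVec
      (fun i : Fin (d2+1) => ψ (N - (d2:ℤ) + ((i:ℕ):ℤ)) x)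
      = fun i : Fin (d2+1) => ψ (N + (j:ℤ) - (d2:ℤ) + ((i:ℕ):ℤ)) x := by
    intro j
    induction j with
    | zero =>
      rw [aProd, Matrix.one_mulVec]
      funext i
      norm_num
    | succ j ih =>
      rw [aProd, ← Matrix.mulVec_mulVec, ih]
      rw [hstep (N + (j:ℤ)) x]
      funext i
      congr 2
      push_cast
      ring
  -- the inverse acts as a backward shift
  have hAB := aMat_mul_bMat d2 hd2 α γ hγ hαd2 (N-1) x
  have hinvstep : (aMat d2 α γ (N-1) x)⁻¹.mulVec
      (fun i : Fin (d2+1) => ψ (N - (d2:ℤ) + ((i:ℕ):ℤ)) x)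
      = fun i : Fin (d2+1) => ψ (N - (d2:ℤ) - 1 + ((i:ℕ):ℤ)) x := by
    have h1 := hstep (N-1) x
    have harg : ∀ i : Fin (d2+1), N - 1 + 1 - (d2:ℤ) + ((i:ℕ):ℤ) = N - (d2:ℤ) + ((i:ℕ):ℤ) :=
      fun _ => by ring
    simp only [harg] at h1
    rw [← h1, Matrix.mulVec_mulVec,
      Matrix.nonsing_inv_mul _ (Matrix.isUnit_det_of_right_inverse hAB),
      Matrix.one_mulVec]
    funext i
    congr 2
    ring
  funext i
  simp only [D1Mat, Matrix.add_mulVec, Pi.neg_apply, Pi.add_apply, sumMulVec,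
    ← Matrix.mulVec_mulVec]
  rw [hinvstep, hder (N - (d2:ℤ) + ((i:ℕ):ℤ)) x]
  simp only [Matrix.mulVec_diagonal]
  have hsum_apply : (∑ j ∈ Finset.Icc 1 d1,
      (Matrix.diagonal (fun i : Fin (d2+1) => β (j:ℤ) (N + (j:ℤ) - (d2:ℤ) + ((i:ℕ):ℤ)))).mulVec
        ((aProd d2 α γ N x j).mulVec (fun i : Fin (d2+1) => ψ (N - (d2:ℤ) + ((i:ℕ):ℤ)) x))) i
      = ∑ j ∈ Finset.Icc 1 d1, β (j:ℤ) (N + (j:ℤ) - (d2:ℤ) + ((i:ℕ):ℤ))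
          * ψ (N + (j:ℤ) - (d2:ℤ) + ((i:ℕ):ℤ)) x := by
    rw [Finset.sum_apply]
    refine Finset.sum_congr rfl fun j _ => ?_
    rw [hprod j, Matrix.mulVec_diagonal]
  rw [hsum_apply]
  -- now handle the left side
  have hins : Finset.Icc (0:ℤ) (d1:ℤ) = insert (0:ℤ) (Finset.Icc (1:ℤ) (d1:ℤ)) := by
    ext j
    simp only [Finset.mem_Icc, Finset.mem_insert]
    omega
  rw [hins, Finset.sum_insert (by simp),
    sumIcc1IntNat d1 (fun j => β j ((N - (d2:ℤ) + ((i:ℕ):ℤ)) + j)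
      * ψ ((N - (d2:ℤ) + ((i:ℕ):ℤ)) + j) x)]
  have harg2 : ∀ j : ℕ, (N - (d2:ℤ) + ((i:ℕ):ℤ)) + (j:ℤ) = N + (j:ℤ) - (d2:ℤ) + ((i:ℕ):ℤ) :=
    fun _ => by ring
  simp only [harg2]
  have harg3 : N - (d2:ℤ) + ((i:ℕ):ℤ) - 1 = N - (d2:ℤ) - 1 + ((i:ℕ):ℤ) := by ring
  have harg4 : (N - (d2:ℤ) + ((i:ℕ):ℤ)) + (0:ℤ) = N - (d2:ℤ) + ((i:ℕ):ℤ) := by ring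
  rw [harg3, harg4]
  ring
end

section
/- Let K ≥ 1, let t range over ℝ, let α_j(n,t) (with γ(n,t) := α_{−1}(n,t)) be recursion coefficients depending on t with γ(n,t) ≠ 0 for all n, t, and let U_j(n,t) ∈ ℂ be given for 0 ≤ j ≤ K, n ∈ ℤ. Let ψ_n(x,t) (n ∈ ℤ) be complex-valued families, differentiable in t, satisfying for all n ∈ ℤ, x ∈ ℂ, t: x·ψ_n(x,t) = Σ_{j=−1}^{d2} α_j(n,t)·ψ_{n−j}(x,t) and ∂_t ψ_n(x,t) = Σ_{j=0}^{K} U_j(n,t)·ψ_{n+j}(x,t). Then for every N ∈ ℤ the window column vector Ψ_N(x,t) := (ψ_{N−d2}(x,t), …, ψ_N(x,t))ᵗ satisfies the folded deformation equation ∂_t Ψ_N(x,t) = 𝐔_K^N(x,t)·Ψ_N(x,t). -/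
/-!
Since `γ(m) ≠ 0`, the recursion at `m` can be solved for `ψ_{m+1}`: the first `d2` rows of
`a_m` shift the window and its last row computes `ψ_{m+1}`, so `a_m Ψ_m = Ψ_{m+1}`. Hence
`a_{N+j-1} ⋯ a_N Ψ_N = Ψ_{N+j}`, and row `i` of `𝐔_K^N Ψ_N` is `Σ_j U_j(n) ψ_{n+j} = ∂ₜ ψ_n`
with `n = N - d2 + i`.
-/

open Matrix BigOperators

noncomputable def UKNMat (d2 K : ℕ) (α : ℤ → ℤ → ℝ → ℂ) (γ : ℤ → ℝ → ℂ)
    (U : ℤ → ℤ → ℝ → ℂ) (N : ℤ) (x : ℂ) (t : ℝ) :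
    Matrix (Fin (d2 + 1)) (Fin (d2 + 1)) ℂ :=
  ∑ j ∈ Finset.Icc 0 K,
    Matrix.diagonal (fun i : Fin _ => U (j : ℤ) (N - (d2 : ℤ) + ((i : ℕ) : ℤ)) t)
      * aProd d2 (fun a b => α a b t) (fun n => γ n t) N x j

theorem Finset.sum_Icc_int_eq_sum_Icc_nat {M : Type*} [AddCommMonoid M] (f : ℤ → M) (n : ℕ) :
    ∑ j ∈ Finset.Icc (0 : ℤ) n, f j = ∑ k ∈ Finset.Icc 0 n, f k :=
  Finset.sum_nbij' Int.toNat (fun k => k) (fun j hj => by simp at hj ⊢; omega) (by simp)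
    (fun j hj => by simp at hj; omega) (by simp) (fun j hj => by simp at hj; congr; omega)

theorem Finset.sum_Icc_int_neg_one_eq_add_sum_fin {M : Type*} [AddCommMonoid M] (f : ℤ → M)
    (d : ℕ) :
    ∑ j ∈ Finset.Icc (-1 : ℤ) d, f j = f (-1) + ∑ b : Fin (d + 1), f ((d : ℤ) - (b : ℕ)) := by
  rw [← Finset.insert_Icc_add_one_left_eq_Icc (by omega), Finset.sum_insert (by simp),
    neg_add_cancel]
  congr 1
  symm
  refine Finset.sum_bij (fun b _ => (d : ℤ) - (b : ℕ)) (fun b _ => ?_) (fun b _ c _ h => ?_)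
    (fun j hj => ?_) (fun _ _ => rfl)
  · simp only [Finset.mem_Icc]; omega
  · exact Fin.ext (by omega)
  · rw [Finset.mem_Icc] at hj
    exact ⟨⟨(d - j).toNat, by omega⟩, Finset.mem_univ _, by simp only; omega⟩

def window {R : Type*} (d : ℕ) (ψ : ℤ → R) (N : ℤ) : Fin (d + 1) → R :=
  fun i => ψ (N - d + (i : ℕ))

section aMat

variable {d2 : ℕ} {α : ℤ → ℤ → ℂ} {γ : ℤ → ℂ} {x : ℂ} {ψ : ℤ → ℂ}

theorem aMat_apply_of_lt {m : ℤ} {i : Fin (d2 + 1)} (hi : (i : ℕ) < d2) (b : Fin (d2 + 1)) :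
    aMat d2 α γ m x i b = if (b : ℕ) = i + 1 then 1 else 0 := by
  simp [aMat, hi]

theorem aMat_apply_of_not_lt {m : ℤ} {i : Fin (d2 + 1)} (hi : ¬ (i : ℕ) < d2)
    (b : Fin (d2 + 1)) :
    aMat d2 α γ m x i b = ((if b = Fin.last d2 then x else 0) - α (d2 - (b : ℕ)) m) / γ m := by
  by_cases hb : b = Fin.last d2
  · simp [aMat, hi, hb]
  · have hb' : (b : ℕ) ≠ d2 := fun h => hb (Fin.ext h)
    simp [aMat, hi, hb, hb', neg_div]

theorem aMat_mulVec_window {m : ℤ} (hγ : γ m ≠ 0) (hαγ : α (-1) m = γ m)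
    (hrec : x * ψ m = ∑ j ∈ Finset.Icc (-1 : ℤ) d2, α j m * ψ (m - j)) :
    aMat d2 α γ m x *ᵥ window d2 ψ m = window d2 ψ (m + 1) := by
  have hstep : x * ψ m = γ m * ψ (m + 1) +
      ∑ b : Fin (d2 + 1), α (d2 - (b : ℕ)) m * ψ (m - d2 + (b : ℕ)) := by
    rw [hrec, Finset.sum_Icc_int_neg_one_eq_add_sum_fin, hαγ, sub_neg_eq_add]
    simp_rw [sub_sub_eq_add_sub, add_sub_right_comm]
  funext i
  rw [mulVec_apply_eq_sum]
  by_cases hi : (i : ℕ) < d2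
  · simp_rw [aMat_apply_of_lt hi, ite_mul, one_mul, zero_mul]
    rw [Fintype.sum_eq_single ⟨i + 1, by omega⟩ fun b hb => if_neg fun h => hb (Fin.ext h)]
    simp only [window, if_true]
    push_cast
    ring_nf
  · have hi' : (i : ℕ) = d2 := by omega
    simp_rw [aMat_apply_of_not_lt hi, div_mul_eq_mul_div, ← Finset.sum_div, sub_mul,
      Finset.sum_sub_distrib, ite_mul, zero_mul]
    rw [Finset.sum_ite_eq', if_pos (Finset.mem_univ _), div_eq_iff hγ]
    simp only [window, Fin.val_last, hi']
    rw [sub_add_cancel, sub_add_cancel]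
    linear_combination hstep

theorem aProd_mulVec_window (hγ : ∀ n, γ n ≠ 0) (hαγ : ∀ n, α (-1) n = γ n)
    (hrec : ∀ n, x * ψ n = ∑ j ∈ Finset.Icc (-1 : ℤ) d2, α j n * ψ (n - j)) (N : ℤ) (j : ℕ) :
    aProd d2 α γ N x j *ᵥ window d2 ψ N = window d2 ψ (N + j) := by
  induction j with
  | zero => simp [aProd]
  | succ j ih =>
    rw [aProd, ← mulVec_mulVec, ih, aMat_mulVec_window (hγ _) (hαγ _) (hrec _)]
    push_cast
    rw [add_assoc]

end aMat

theorem window_deformation_system_Psi_general (d2 K : ℕ)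
    (α : ℤ → ℤ → ℝ → ℂ) (γ : ℤ → ℝ → ℂ) (U : ℤ → ℤ → ℝ → ℂ)
    (hαγ : ∀ (n : ℤ) (t : ℝ), α (-1) n t = γ n t)
    (hγ : ∀ (n : ℤ) (t : ℝ), γ n t ≠ 0)
    (ψ : ℤ → ℂ → ℝ → ℂ)
    (hrec : ∀ (n : ℤ) (x : ℂ) (t : ℝ),
      x * ψ n x t = ∑ j ∈ Finset.Icc (-1 : ℤ) (d2 : ℤ), α j n t * ψ (n - j) x t)
    (hdef : ∀ (n : ℤ) (x : ℂ) (t : ℝ),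
      deriv (ψ n x) t = ∑ j ∈ Finset.Icc (0 : ℤ) (K : ℤ), U j n t * ψ (n + j) x t)
    (N : ℤ) (x : ℂ) (t : ℝ) :
    (fun i : Fin (d2 + 1) => deriv (ψ (N - (d2 : ℤ) + ((i : ℕ) : ℤ)) x) t) =
      (UKNMat d2 K α γ U N x t).mulVec
        (fun i : Fin (d2 + 1) => ψ (N - (d2 : ℤ) + ((i : ℕ) : ℤ)) x t) := by
  have hwin (j : ℕ) := aProd_mulVec_window (fun n => hγ n t) (fun n => hαγ n t)
    (fun n => hrec n x t) N j
  change _ = UKNMat d2 K α γ U N x t *ᵥ window d2 (fun n => ψ n x t) N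
  funext i
  rw [hdef, Finset.sum_Icc_int_eq_sum_Icc_nat, UKNMat, Matrix.sum_mulVec, Finset.sum_apply]
  refine Finset.sum_congr rfl fun j _ => ?_
  rw [← mulVec_mulVec, hwin, mulVec_diagonal, window]
  ring_nf

/-- The window `Ψ_N` satisfies the folded deformation equation
`∂ₜ Ψ_N = 𝐔_K^N · Ψ_N`. -/
theorem window_deformation_system_Psi (d1 d2 K : ℕ)
    (hd1 : 1 ≤ d1) (hd2 : 1 ≤ d2) (hK : 1 ≤ K)
    (α : ℤ → ℤ → ℝ → ℂ) (γ : ℤ → ℝ → ℂ) (U : ℤ → ℤ → ℝ → ℂ)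
    (hαsupp : ∀ (j n : ℤ) (t : ℝ), (j < -1 ∨ (d2 : ℤ) < j) → α j n t = 0)
    (hαγ : ∀ (n : ℤ) (t : ℝ), α (-1) n t = γ n t)
    (hγ : ∀ (n : ℤ) (t : ℝ), γ n t ≠ 0)
    (hUsupp : ∀ (j n : ℤ) (t : ℝ), (j < 0 ∨ (K : ℤ) < j) → U j n t = 0)
    (ψ : ℤ → ℂ → ℝ → ℂ)
    (hψdiff : ∀ (n : ℤ) (x : ℂ), Differentiable ℝ (ψ n x))
    (hrec : ∀ (n : ℤ) (x : ℂ) (t : ℝ),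
      x * ψ n x t = ∑ j ∈ Finset.Icc (-1 : ℤ) (d2 : ℤ), α j n t * ψ (n - j) x t)
    (hdef : ∀ (n : ℤ) (x : ℂ) (t : ℝ),
      deriv (ψ n x) t = ∑ j ∈ Finset.Icc (0 : ℤ) (K : ℤ), U j n t * ψ (n + j) x t)
    (N : ℤ) (x : ℂ) (t : ℝ) :
    (fun i : Fin (d2 + 1) => deriv (ψ (N - (d2 : ℤ) + ((i : ℕ) : ℤ)) x) t) =
      (UKNMat d2 K α γ U N x t).mulVec
        (fun i : Fin (d2 + 1) => ψ (N - (d2 : ℤ) + ((i : ℕ) : ℤ)) x t) :=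
  window_deformation_system_Psi_general d2 K α γ U hαγ hγ ψ hrec hdef N x t
end

section
/- Let K ≥ 1 and let t ↦ α_j(n,t) (with γ(n,t) := α_{−1}(n,t)) be differentiable families of recursion coefficients with γ(n,t) ≠ 0 for all n, t, and let t ↦ U_j(n,t) (0 ≤ j ≤ K) be given families. Assume the entrywise deformation equation ∂_t Q_{n,m}(t) = −Σ_k (Q_{n,k}(t)·U_{k,m}(t) − U_{n,k}(t)·Q_{k,m}(t)) for all n, m ∈ ℤ and all t, where Q_{n,m}(t) = α_{n−m}(n,t) (nonzero only for −1 ≤ n−m ≤ d2) and U_{n,m}(t) = U_{m−n}(n,t) for 0 ≤ m−n ≤ K and 0 otherwise (all sums are finite by the band structures). Then for every N ∈ ℤ, x ∈ ℂ and t: ∂_t a_N(x,t) = 𝐔_K^{N+1}(x,t)·a_N(x,t) − a_N(x,t)·𝐔_K^N(x,t); i.e. the shift N ↦ N+1 implemented by a_N is compatible with the sequence of deformation systems defined by the 𝐔_K^N. -/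
open Matrix BigOperators
noncomputable def psi (d2 : ℕ) (α : ℤ → ℤ → ℂ) (γ : ℤ → ℂ) (N : ℤ) (x : ℂ) (b : ℕ) (k : ℕ) : ℂ :=
  if k ≤ d2 then (if k = b then 1 else 0)
  else (x * psi d2 α γ N x b (k-1)
      - ∑ l ∈ Finset.range (d2+1), α (l : ℤ) (N + ((k - 1 - d2 : ℕ) : ℤ)) * psi d2 α γ N x b (k-1-l))
      / γ (N + ((k - 1 - d2 : ℕ) : ℤ))
  termination_by k
  decreasing_by all_goals omega

section Aux
variable (d2 : ℕ) (α : ℤ → ℤ → ℂ) (γ : ℤ → ℂ) (N : ℤ) (x : ℂ)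

lemma aMat_apply_lt (i b : Fin (d2+1)) (hi : (i:ℕ) < d2) :
    aMat d2 α γ N x i b = if (b:ℕ) = (i:ℕ)+1 then 1 else 0 := by
  simp [aMat, hi]

lemma aMat_mul_apply_lt (B : Matrix (Fin (d2+1)) (Fin (d2+1)) ℂ)
    (i b : Fin (d2+1)) (hi : (i:ℕ) < d2) :
    (aMat d2 α γ N x * B) i b = B ⟨(i:ℕ)+1, by omega⟩ b := by
  rw [Matrix.mul_apply]
  rw [Finset.sum_eq_single (⟨(i:ℕ)+1, by omega⟩ : Fin (d2+1))]
  · rw [aMat_apply_lt _ _ _ _ _ _ _ hi]; simp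
  · intro e _ he
    rw [aMat_apply_lt _ _ _ _ _ _ _ hi]
    have : ¬((e:ℕ) = (i:ℕ)+1) := by
      intro h; apply he; apply Fin.ext; simpa using h
    simp [this]
  · simp


lemma aProd_shift (j : ℕ) :
    aProd d2 α γ (N+1) x j * aMat d2 α γ N x = aProd d2 α γ N x (j+1) := by
  induction j with
  | zero => simp [aProd]
  | succ j ih =>
      show (aMat d2 α γ (N+1+(j:ℤ)) x * aProd d2 α γ (N+1) x j) * aMat d2 α γ N x = _
      rw [Matrix.mul_assoc, ih]
      show aMat d2 α γ (N+1+(j:ℤ)) x * aProd d2 α γ N x (j+1) = aProd d2 α γ N x (j+2)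
      have : N + 1 + (j:ℤ) = N + ((j+1 : ℕ) : ℤ) := by push_cast; ring
      rw [this]
      rfl


lemma psi_le (b k : ℕ) (hk : k ≤ d2) : psi d2 α γ N x b k = if k = b then 1 else 0 := by
  rw [psi]; simp [hk]

lemma psi_succ (b : ℕ) (j : ℕ) :
    psi d2 α γ N x b (d2+1+j) =
      (x * psi d2 α γ N x b (d2+j)
      - ∑ l ∈ Finset.range (d2+1), α (l : ℤ) (N + (j : ℤ)) * psi d2 α γ N x b (d2+j-l))
      / γ (N + (j : ℤ)) := by
  rw [psi]
  have h1 : ¬ (d2+1+j ≤ d2) := by omega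
  have h2 : d2+1+j-1 = d2+j := by omega
  have h3 : d2+1+j-1-d2 = j := by omega
  have h4 : d2+j-d2 = j := by omega
  simp only [h1, if_false, h2, h3, h4]

lemma aProd_apply (hγ : ∀ n, γ n ≠ 0) (j : ℕ) (c b : Fin (d2+1)) :
    aProd d2 α γ N x j c b = psi d2 α γ N x (b:ℕ) ((c:ℕ) + j) := by
  induction j generalizing c with
  | zero =>
      have : (c:ℕ) ≤ d2 := by omega
      simp only [Nat.add_zero]
      rw [psi_le _ _ _ _ _ _ _ this]
      show (1 : Matrix (Fin (d2+1)) (Fin (d2+1)) ℂ) c b = _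
      rw [Matrix.one_apply]
      simp [Fin.ext_iff]
  | succ j ih =>
      show (aMat d2 α γ (N + (j:ℤ)) x * aProd d2 α γ N x j) c b = _
      rcases lt_or_ge (c:ℕ) d2 with hc | hc
      · rw [aMat_mul_apply_lt _ _ _ _ _ _ _ _ hc, ih]
        congr 1
        simp
        omega
      · have hc' : (c:ℕ) = d2 := by omega
        rw [Matrix.mul_apply]
        have key : ∀ e : Fin (d2+1), aMat d2 α γ (N + (j:ℤ)) x c e * aProd d2 α γ N x j e b
            = aMat d2 α γ (N + (j:ℤ)) x c e * psi d2 α γ N x (b:ℕ) ((e:ℕ) + j) := by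
          intro e; rw [ih]
        rw [Finset.sum_congr rfl (fun e _ => key e)]
        have hcj : (c:ℕ) + (j+1) = d2+1+j := by omega
        rw [hcj, psi_succ]
        rw [Fin.sum_univ_castSucc]
        have hlast : aMat d2 α γ (N+(j:ℤ)) x c (Fin.last d2)
            = (x - α 0 (N+(j:ℤ)))/γ (N+(j:ℤ)) := by
          simp [aMat, hc']
        have hcs : ∀ e : Fin d2, aMat d2 α γ (N+(j:ℤ)) x c e.castSucc
            = -α ((d2:ℤ)-((e:ℕ):ℤ)) (N+(j:ℤ)) / γ (N+(j:ℤ)) := by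
          intro e
          have h5 : ¬((e:ℕ) = d2) := by omega
          simp only [aMat, Matrix.of_apply, hc', lt_irrefl, if_false, Fin.coe_castSucc, h5]
        simp only [Fin.coe_castSucc, Fin.val_last] at *
        rw [hlast, Finset.sum_congr rfl (fun e _ => by rw [hcs e])]
        -- now reflect the sum ∑_{l∈range(d2+1)} α l (N+j) ψ(d2+j-l)
        have hrefl : ∑ l ∈ Finset.range (d2+1), α (l:ℤ) (N + (j:ℤ)) * psi d2 α γ N x (b:ℕ) (d2+j-l)
            = ∑ e ∈ Finset.range (d2+1), α ((d2:ℤ) - (e:ℤ)) (N + (j:ℤ)) * psi d2 α γ N x (b:ℕ) (e+j) := by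
          rw [← Finset.sum_range_reflect]
          apply Finset.sum_congr rfl
          intro e he
          simp only [Finset.mem_range] at he
          have h1 : d2 + 1 - 1 - e = d2 - e := by omega
          have h2 : ((d2 - e : ℕ) : ℤ) = (d2:ℤ) - (e:ℤ) := by omega
          have h3 : d2 + j - (d2 - e) = e + j := by omega
          rw [h1, h2, h3]
        rw [hrefl, Finset.sum_range_succ]
        have h4 : ((d2:ℤ) - (d2:ℤ)) = 0 := by ring
        rw [h4]
        rw [← Fin.sum_univ_eq_sum_range
          (fun e => α ((d2:ℤ) - (e:ℤ)) (N + (j:ℤ)) * psi d2 α γ N x (b:ℕ) (e+j)) d2]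
        simp only [div_mul_eq_mul_div, neg_mul]
        rw [← Finset.sum_div, ← add_div]
        congr 1
        rw [Finset.sum_neg_distrib]
        ring
end Aux

lemma int_shift (N' : ℤ) (n : ℕ) (F : ℤ → ℂ) :
    ∑ k ∈ Finset.Icc N' (N' + (n:ℤ)), F k = ∑ e ∈ Finset.Icc 0 n, F (N' + (e:ℤ)) := by
  refine Finset.sum_nbij' (fun k => (k - N').toNat) (fun e => N' + (e:ℤ)) ?_ ?_ ?_ ?_ ?_
  · intro a ha; simp only [Finset.mem_Icc] at *; omega
  · intro a ha; simp only [Finset.mem_Icc] at *; omega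
  · intro a ha; simp only [Finset.mem_Icc] at *; omega
  · intro a ha; simp only [Finset.mem_Icc] at *; omega
  · intro a ha; simp only [Finset.mem_Icc] at ha
    have : N' + (((a - N').toNat : ℕ) : ℤ) = a := by omega
    rw [this]

lemma nat_shift (a n : ℕ) (g : ℕ → ℂ) :
    ∑ m ∈ Finset.Icc a (a+n), g m = ∑ e ∈ Finset.Icc 0 n, g (a+e) := by
  refine Finset.sum_nbij' (fun m => m - a) (fun e => a + e) ?_ ?_ ?_ ?_ ?_
  · intro b hb; simp only [Finset.mem_Icc] at *; omega
  · intro b hb; simp only [Finset.mem_Icc] at *; omega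
  · intro b hb; simp only [Finset.mem_Icc] at *; omega
  · intro b hb; simp only [Finset.mem_Icc] at *; omega
  · intro b hb; simp only [Finset.mem_Icc] at hb
    have : a + (b - a) = b := by omega
    rw [this]

lemma keylemma (d2 K : ℕ) (f : ℤ → ℤ → ℂ) (Uv : ℤ → ℤ → ℂ) (G : ℤ → ℂ) (Ψ : ℕ → ℂ) (N : ℤ)
    (hfsupp : ∀ l n : ℤ, (l < -1 ∨ (d2:ℤ) < l) → f l n = 0)
    (hUsupp : ∀ l n : ℤ, (l < 0 ∨ (K:ℤ) < l) → Uv l n = 0)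
    (hG : ∀ m : ℕ, G m = ∑ k ∈ Finset.Icc (N-(d2:ℤ)) (N+(K:ℤ)+1),
        (f (N-k) N * Uv (N-(d2:ℤ)+(m:ℤ)-k) k - Uv (k-N) N * f (k-N+(d2:ℤ)-(m:ℤ)) k))
    (hG0 : ∀ m : ℕ, (d2:ℤ)+1 < (m:ℤ) → G m = 0) :
    ∑ e ∈ Finset.Icc 0 (d2+1), ∑ j ∈ Finset.Icc 0 K,
      (f ((d2:ℤ)-(e:ℤ)) N * Uv (j:ℤ) (N-(d2:ℤ)+(e:ℤ)) - Uv (j:ℤ) N * f ((d2:ℤ)-(e:ℤ)) (N+(j:ℤ)))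
        * Ψ (e+j)
    = ∑ m ∈ Finset.Icc 0 (d2+1), G (m:ℤ) * Ψ m := by
  have hsub : Finset.Icc 0 (d2+1) ⊆ Finset.Icc 0 (d2+K+1) :=
    Finset.Icc_subset_Icc_right (by omega)
  have ext1 : ∑ e ∈ Finset.Icc 0 (d2+1), ∑ j ∈ Finset.Icc 0 K,
      (f ((d2:ℤ)-(e:ℤ)) N * Uv (j:ℤ) (N-(d2:ℤ)+(e:ℤ)) - Uv (j:ℤ) N * f ((d2:ℤ)-(e:ℤ)) (N+(j:ℤ)))
        * Ψ (e+j)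
      = ∑ e ∈ Finset.Icc 0 (d2+K+1), ∑ j ∈ Finset.Icc 0 K,
      (f ((d2:ℤ)-(e:ℤ)) N * Uv (j:ℤ) (N-(d2:ℤ)+(e:ℤ)) - Uv (j:ℤ) N * f ((d2:ℤ)-(e:ℤ)) (N+(j:ℤ)))
        * Ψ (e+j) := by
    apply Finset.sum_subset hsub
    intro e he hne
    have he' : (d2:ℤ) - (e:ℤ) < -1 := by
      simp only [Finset.mem_Icc] at he hne; omega
    apply Finset.sum_eq_zero
    intro j _
    rw [hfsupp _ _ (Or.inl he'), hfsupp _ _ (Or.inl he')]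
    ring
  have ext2 : ∑ m ∈ Finset.Icc 0 (d2+1), G (m:ℤ) * Ψ m
      = ∑ m ∈ Finset.Icc 0 (d2+K+1), G (m:ℤ) * Ψ m := by
    apply Finset.sum_subset hsub
    intro m hm hmne
    rw [hG0 m (by simp only [Finset.mem_Icc] at hm hmne; omega)]
    ring
  rw [ext1, ext2]
  have hR : ∀ m ∈ Finset.Icc 0 (d2+K+1), G (m:ℤ) * Ψ m
      = ∑ e' ∈ Finset.Icc 0 (d2+K+1),
          (f ((d2:ℤ)-(e':ℤ)) N * Uv ((m:ℤ)-(e':ℤ)) (N-(d2:ℤ)+(e':ℤ))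
           - Uv ((e':ℤ)-(d2:ℤ)) N * f ((e':ℤ)-(m:ℤ)) (N-(d2:ℤ)+(e':ℤ))) * Ψ m := by
    intro m _
    rw [hG m]
    have harg : N + (K:ℤ) + 1 = (N - (d2:ℤ)) + ((d2+K+1 : ℕ):ℤ) := by push_cast; ring
    rw [harg, int_shift, Finset.sum_mul]
    apply Finset.sum_congr rfl
    intro e' _
    have e1 : N - (N - (d2:ℤ) + (e':ℤ)) = (d2:ℤ) - (e':ℤ) := by ring
    have e2 : N - (d2:ℤ) + (m:ℤ) - (N - (d2:ℤ) + (e':ℤ)) = (m:ℤ) - (e':ℤ) := by ring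
    have e3 : N - (d2:ℤ) + (e':ℤ) - N = (e':ℤ) - (d2:ℤ) := by ring
    rw [e1, e2, e3]
    have e4 : (e':ℤ) - (d2:ℤ) + (d2:ℤ) - (m:ℤ) = (e':ℤ) - (m:ℤ) := by ring
    rw [e4]
  rw [Finset.sum_congr rfl hR]
  simp only [sub_mul, Finset.sum_sub_distrib]
  congr 1
  · -- Part A
    conv_rhs => rw [Finset.sum_comm]
    apply Finset.sum_congr rfl
    intro e he
    simp only [Finset.mem_Icc] at he
    by_cases hcase : e ≤ d2 + 1
    · have hsub2 : Finset.Icc e (e+K) ⊆ Finset.Icc 0 (d2+K+1) :=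
        Finset.Icc_subset_Icc (by omega) (by omega)
      rw [← Finset.sum_subset hsub2 (fun m hm hmn => ?_)]
      · rw [nat_shift]
        apply Finset.sum_congr rfl
        intro j _
        have harg2 : ((e+j : ℕ):ℤ) - (e:ℤ) = (j:ℤ) := by push_cast; ring
        rw [harg2]
      · have : ((m:ℤ) - (e:ℤ) < 0 ∨ (K:ℤ) < (m:ℤ) - (e:ℤ)) := by
          simp only [Finset.mem_Icc] at hm hmn; omega
        rw [hUsupp _ _ this]
        ring
    · have hz : f ((d2:ℤ)-(e:ℤ)) N = 0 := hfsupp _ _ (Or.inl (by omega))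
      rw [Finset.sum_eq_zero, Finset.sum_eq_zero] <;> intro z _ <;> rw [hz] <;> ring
  · -- Part B
    conv_rhs => rw [Finset.sum_comm]
    conv_lhs => rw [Finset.sum_comm]
    have hsub3 : Finset.Icc d2 (d2+K) ⊆ Finset.Icc 0 (d2+K+1) :=
      Finset.Icc_subset_Icc (by omega) (by omega)
    rw [show (∑ e' ∈ Finset.Icc 0 (d2+K+1), ∑ m ∈ Finset.Icc 0 (d2+K+1),
          Uv ((e':ℤ)-(d2:ℤ)) N * f ((e':ℤ)-(m:ℤ)) (N-(d2:ℤ)+(e':ℤ)) * Ψ m)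
        = ∑ e' ∈ Finset.Icc d2 (d2+K), ∑ m ∈ Finset.Icc 0 (d2+K+1),
          Uv ((e':ℤ)-(d2:ℤ)) N * f ((e':ℤ)-(m:ℤ)) (N-(d2:ℤ)+(e':ℤ)) * Ψ m
      from (Finset.sum_subset hsub3 (fun e' he' hne' => Finset.sum_eq_zero (fun m _ => by
        rw [hUsupp _ _ (by simp only [Finset.mem_Icc] at he' hne'; omega)]; ring))).symm]
    rw [nat_shift d2 K (fun e' => ∑ m ∈ Finset.Icc 0 (d2+K+1),
          Uv ((e':ℤ)-(d2:ℤ)) N * f ((e':ℤ)-(m:ℤ)) (N-(d2:ℤ)+(e':ℤ)) * Ψ m)]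
    apply Finset.sum_congr rfl
    intro j hj
    simp only [Finset.mem_Icc] at hj
    have c1 : ((d2+j : ℕ):ℤ) - (d2:ℤ) = (j:ℤ) := by push_cast; ring
    have c2 : N - (d2:ℤ) + ((d2+j : ℕ):ℤ) = N + (j:ℤ) := by push_cast; ring
    simp only [c1, c2]
    have hsub4 : Finset.Icc j (j+(d2+1)) ⊆ Finset.Icc 0 (d2+K+1) :=
      Finset.Icc_subset_Icc (by omega) (by omega)
    rw [show (∑ m ∈ Finset.Icc 0 (d2+K+1),
          Uv (j:ℤ) N * f (((d2+j : ℕ):ℤ)-(m:ℤ)) (N+(j:ℤ)) * Ψ m)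
        = ∑ m ∈ Finset.Icc j (j+(d2+1)),
          Uv (j:ℤ) N * f (((d2+j : ℕ):ℤ)-(m:ℤ)) (N+(j:ℤ)) * Ψ m
      from (Finset.sum_subset hsub4 (fun m hm hmn => by
        rw [hfsupp (((d2+j : ℕ):ℤ)-(m:ℤ)) _ (by
          simp only [Finset.mem_Icc] at hm hmn; push_cast; omega)]; ring)).symm]
    rw [nat_shift j (d2+1) (fun m => Uv (j:ℤ) N * f (((d2+j : ℕ):ℤ)-(m:ℤ)) (N+(j:ℤ)) * Ψ m)]
    have hsub5 : Finset.Icc 0 (d2+1) ⊆ Finset.Icc 0 (d2+K+1) :=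
      Finset.Icc_subset_Icc (by omega) (by omega)
    rw [show (∑ e ∈ Finset.Icc 0 (d2+K+1),
          Uv (j:ℤ) N * f ((d2:ℤ)-(e:ℤ)) (N+(j:ℤ)) * Ψ (e+j))
        = ∑ e ∈ Finset.Icc 0 (d2+1),
          Uv (j:ℤ) N * f ((d2:ℤ)-(e:ℤ)) (N+(j:ℤ)) * Ψ (e+j)
      from (Finset.sum_subset hsub5 (fun e he hne => by
        rw [hfsupp ((d2:ℤ)-(e:ℤ)) _ (by
          simp only [Finset.mem_Icc] at he hne; omega)]; ring)).symm]
    apply Finset.sum_congr rfl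
    intro e he
    simp only [Finset.mem_Icc] at he
    have c3 : ((d2+j : ℕ):ℤ) - ((j+e : ℕ):ℤ) = (d2:ℤ) - (e:ℤ) := by push_cast; ring
    have c4 : j + e = e + j := by omega
    rw [c3, c4]

lemma xpsi (d2 : ℕ) (f : ℤ → ℤ → ℂ) (g : ℤ → ℂ) (N : ℤ) (x : ℂ) (b : ℕ)
    (hg : ∀ n, g n ≠ 0) (hfg : ∀ n, f (-1) n = g n) (j : ℕ) :
    x * psi d2 f g N x b (d2+j) =
      ∑ e ∈ Finset.Icc 0 (d2+1), f ((d2:ℤ)-(e:ℤ)) (N+(j:ℤ)) * psi d2 f g N x b (e+j) := by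
  have h2 : x * psi d2 f g N x b (d2+j)
      = g (N+(j:ℤ)) * psi d2 f g N x b (d2+1+j)
        + ∑ l ∈ Finset.range (d2+1), f (l:ℤ) (N+(j:ℤ)) * psi d2 f g N x b (d2+j-l) := by
    rw [psi_succ, ← mul_div_assoc, mul_div_cancel_left₀ _ (hg (N+(j:ℤ)))]
    ring
  rw [h2]
  have hIcc : Finset.Icc 0 (d2+1) = Finset.range (d2+2) := by
    rw [← Finset.Ico_add_one_right_eq_Icc, Finset.range_eq_Ico]; rfl
  conv_rhs => rw [hIcc, Finset.sum_range_succ]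
  have htop : ((d2:ℤ) - ((d2+1 : ℕ):ℤ)) = -1 := by push_cast; ring
  rw [htop, hfg]
  have hrefl : ∑ l ∈ Finset.range (d2+1), f (l:ℤ) (N+(j:ℤ)) * psi d2 f g N x b (d2+j-l)
      = ∑ e ∈ Finset.range (d2+1), f ((d2:ℤ)-(e:ℤ)) (N+(j:ℤ)) * psi d2 f g N x b (e+j) := by
    rw [← Finset.sum_range_reflect]
    apply Finset.sum_congr rfl
    intro e he
    simp only [Finset.mem_range] at he
    have h1' : d2 + 1 - 1 - e = d2 - e := by omega
    have h2' : ((d2 - e : ℕ):ℤ) = (d2:ℤ) - (e:ℤ) := by omega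
    have h3' : d2 + j - (d2 - e) = e + j := by omega
    rw [h1', h2', h3']
  rw [hrefl]
  have hidx : d2 + 1 + j = (d2+1) + j := rfl
  rw [hidx]
  ring

lemma psi_d2p1 (d2 : ℕ) (f : ℤ → ℤ → ℂ) (g : ℤ → ℂ) (N : ℤ) (x : ℂ) (b : ℕ) (hb : b ≤ d2) :
    psi d2 f g N x b (d2+1) =
      ((if d2 = b then x else 0) - f ((d2:ℤ)-(b:ℤ)) N) / g N := by
  have h := psi_succ d2 f g N x b 0
  simp only [Nat.add_zero] at h
  have hN : N + ((0:ℕ):ℤ) = N := by simp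
  rw [hN] at h
  rw [h]
  have hd2 : psi d2 f g N x b d2 = if d2 = b then 1 else 0 := psi_le d2 f g N x b d2 le_rfl
  have hsum : ∑ l ∈ Finset.range (d2+1), f (l:ℤ) N * psi d2 f g N x b (d2-l)
      = f ((d2:ℤ)-(b:ℤ)) N := by
    rw [Finset.sum_eq_single (d2-b)]
    · have h1 : d2 - (d2-b) = b := by omega
      have h2 : ((d2-b : ℕ):ℤ) = (d2:ℤ)-(b:ℤ) := by omega
      rw [h1, h2, psi_le d2 f g N x b b hb, if_pos rfl, mul_one]
    · intro l hl hlne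
      simp only [Finset.mem_range] at hl
      have : d2 - l ≤ d2 := by omega
      rw [psi_le d2 f g N x b _ this, if_neg (by omega), mul_zero]
    · intro hmem
      exact absurd (Finset.mem_range.mpr (by omega)) hmem
  rw [hd2, hsum]
  congr 1
  rcases eq_or_ne d2 b with h' | h' <;> simp [h']

lemma UKN_apply (d2 K : ℕ) (α : ℤ → ℤ → ℝ → ℂ) (γ : ℤ → ℝ → ℂ)
    (U : ℤ → ℤ → ℝ → ℂ) (M : ℤ) (x : ℂ) (t : ℝ) (c b : Fin (d2+1)) :
    UKNMat d2 K α γ U M x t c b =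
      ∑ j ∈ Finset.Icc 0 K, U (j : ℤ) (M - (d2:ℤ) + ((c:ℕ):ℤ)) t
        * aProd d2 (fun a b => α a b t) (fun n => γ n t) M x j c b := by
  simp [UKNMat, Matrix.sum_apply, Matrix.diagonal_mul]

/-- The shift `N ↦ N+1` implemented by `a_N` is compatible with the sequence of
deformation systems defined by the `𝐔_K^N`:
`∂ₜ a_N(x,t) = 𝐔_K^{N+1}(x,t)·a_N(x,t) − a_N(x,t)·𝐔_K^N(x,t)`. -/
theorem shift_deformation_compatibility (d1 d2 K : ℕ)
    (hd1 : 1 ≤ d1) (hd2 : 1 ≤ d2) (hK : 1 ≤ K)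
    (α : ℤ → ℤ → ℝ → ℂ) (γ : ℤ → ℝ → ℂ) (U : ℤ → ℤ → ℝ → ℂ)
    (hαsupp : ∀ (j n : ℤ) (t : ℝ), (j < -1 ∨ (d2 : ℤ) < j) → α j n t = 0)
    (hαγ : ∀ (n : ℤ) (t : ℝ), α (-1) n t = γ n t)
    (hγ : ∀ (n : ℤ) (t : ℝ), γ n t ≠ 0)
    (hUsupp : ∀ (j n : ℤ) (t : ℝ), (j < 0 ∨ (K : ℤ) < j) → U j n t = 0)
    (hαdiff : ∀ j n : ℤ, Differentiable ℝ (α j n))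
    (hdefQ : ∀ (n m : ℤ) (t : ℝ),
      deriv (fun s => α (n - m) n s) t =
        -∑ k ∈ Finset.Icc (n - (d2 : ℤ)) (n + (K : ℤ) + 1),
          (α (n - k) n t * U (m - k) k t - U (k - n) n t * α (k - m) k t))
    (N : ℤ) (x : ℂ) (t : ℝ) (i j : Fin (d2 + 1)) :
    deriv (fun s => aMat d2 (fun a b => α a b s) (fun n => γ n s) N x i j) t =
      (UKNMat d2 K α γ U (N + 1) x t
          * aMat d2 (fun a b => α a b t) (fun n => γ n t) N x
        - aMat d2 (fun a b => α a b t) (fun n => γ n t) N x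
          * UKNMat d2 K α γ U N x t) i j := by
  rw [Matrix.sub_apply]
  rcases lt_or_ge (i:ℕ) d2 with hi | hi
  · -- easy rows
    have hL : (fun s => aMat d2 (fun a b => α a b s) (fun n => γ n s) N x i j)
        = fun _ => (if (j:ℕ) = (i:ℕ)+1 then (1:ℂ) else 0) := by
      funext s; simp [aMat, hi]
    rw [hL, deriv_const]
    have h1 : (UKNMat d2 K α γ U (N + 1) x t * aMat d2 (fun a b => α a b t) (fun n => γ n t) N x) i j
        = ∑ j' ∈ Finset.Icc 0 K, U (j' : ℤ) (N + 1 - (d2:ℤ) + ((i:ℕ):ℤ)) t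
          * aProd d2 (fun a b => α a b t) (fun n => γ n t) N x (j'+1) ⟨(i:ℕ), by omega⟩ j := by
      rw [UKNMat, Finset.sum_mul, Matrix.sum_apply]
      apply Finset.sum_congr rfl
      intro j' _
      rw [Matrix.mul_assoc, aProd_shift, Matrix.diagonal_mul]
    have h2 : (aMat d2 (fun a b => α a b t) (fun n => γ n t) N x * UKNMat d2 K α γ U N x t) i j
        = ∑ j' ∈ Finset.Icc 0 K, U (j' : ℤ) (N - (d2:ℤ) + (((i:ℕ)+1 : ℕ):ℤ)) t
          * aProd d2 (fun a b => α a b t) (fun n => γ n t) N x j' ⟨(i:ℕ)+1, by omega⟩ j := by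
      rw [aMat_mul_apply_lt _ _ _ _ _ _ _ _ hi, UKN_apply]
    rw [h1, h2]
    rw [← Finset.sum_sub_distrib]
    symm
    apply Finset.sum_eq_zero
    intro j' _
    have e1 : aProd d2 (fun a b => α a b t) (fun n => γ n t) N x (j'+1) ⟨(i:ℕ), by omega⟩ j
        = aProd d2 (fun a b => α a b t) (fun n => γ n t) N x j' ⟨(i:ℕ)+1, by omega⟩ j := by
      show (aMat d2 (fun a b => α a b t) (fun n => γ n t) (N + (j':ℤ)) x * aProd d2 (fun a b => α a b t) (fun n => γ n t) N x j') _ j = _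
      rw [aMat_mul_apply_lt _ _ _ _ _ _ _ _ (show ((⟨(i:ℕ), by omega⟩ : Fin (d2+1)):ℕ) < d2 from hi)]
    have e2 : N + 1 - (d2:ℤ) + ((i:ℕ):ℤ) = N - (d2:ℤ) + (((i:ℕ)+1 : ℕ):ℤ) := by push_cast; ring
    rw [e1, e2, sub_self]
  · -- hard row i = d2
    have hc' : (i:ℕ) = d2 := by omega
    have hγt' : ∀ n : ℤ, (fun n => γ n t) n ≠ 0 := fun n => hγ n t
    have hbb : (j:ℕ) ≤ d2 := by omega
    have h1 : (UKNMat d2 K α γ U (N + 1) x t * aMat d2 (fun a b => α a b t) (fun n => γ n t) N x) i j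
        = ∑ j' ∈ Finset.Icc (0:ℕ) K, U (j':ℤ) (N-(d2:ℤ)+((d2+1:ℕ):ℤ)) t
            * psi d2 (fun a b => α a b t) (fun n => γ n t) N x (j:ℕ) ((d2+1)+j') := by
      rw [UKNMat, Finset.sum_mul, Matrix.sum_apply]
      apply Finset.sum_congr rfl
      intro j' _
      rw [Matrix.mul_assoc, aProd_shift, Matrix.diagonal_mul,
          aProd_apply d2 _ _ N x hγt' (j'+1) i j]
      have e1 : N + 1 - (d2:ℤ) + ((i:ℕ):ℤ) = N - (d2:ℤ) + ((d2+1:ℕ):ℤ) := by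
        rw [hc']; push_cast; ring
      have e2 : (i:ℕ) + (j'+1) = (d2+1) + j' := by omega
      rw [e1, e2]
    have h2 : (aMat d2 (fun a b => α a b t) (fun n => γ n t) N x * UKNMat d2 K α γ U N x t) i j
        = ∑ e : Fin (d2+1), aMat d2 (fun a b => α a b t) (fun n => γ n t) N x i e *
            ∑ j' ∈ Finset.Icc (0:ℕ) K, U (j':ℤ) (N-(d2:ℤ)+((e:ℕ):ℤ)) t
              * psi d2 (fun a b => α a b t) (fun n => γ n t) N x (j:ℕ) ((e:ℕ)+j') := by
      rw [Matrix.mul_apply]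
      apply Finset.sum_congr rfl
      intro e _
      rw [UKN_apply]
      congr 1
      apply Finset.sum_congr rfl
      intro j' _
      rw [aProd_apply d2 _ _ N x hγt' j' e j]
    rw [h1, h2]
    set Ψ : ℕ → ℂ := psi d2 (fun a b => α a b t) (fun n => γ n t) N x (j:ℕ) with hΨ
    apply mul_left_cancel₀ (hγ N t)
    -- derivative side
    have hderiv : γ N t * deriv (fun s => aMat d2 (fun a b => α a b s) (fun n => γ n s) N x i j) t
        = -(deriv (fun s => α ((d2:ℤ)-((j:ℕ):ℤ)) N s) t)
          + -(deriv (fun s => α ((d2:ℤ)-((d2+1:ℕ):ℤ)) N s) t) * Ψ (d2+1) := by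
      have hPval : Ψ (d2+1) = ((if d2 = (j:ℕ) then x else 0)
          - α ((d2:ℤ)-((j:ℕ):ℤ)) N t) / γ N t := by
        rw [hΨ, psi_d2p1 d2 _ _ N x _ hbb]
      have hne : α (-1) N t ≠ 0 := by rw [hαγ]; exact hγ N t
      have hd1' : ((d2:ℤ)-((d2+1:ℕ):ℤ)) = -1 := by push_cast; ring
      rw [hd1']
      rcases eq_or_ne ((j:ℕ)) d2 with hb | hb
      · have hfun : (fun s => aMat d2 (fun a b => α a b s) (fun n => γ n s) N x i j)
            = fun s => (x - α 0 N s) / α (-1) N s := by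
          funext s
          simp only [aMat, Matrix.of_apply, hc', lt_irrefl, if_false, hb, eq_self_iff_true, if_true]
          rw [hαγ]
        rw [hfun]
        rw [show (fun s => (x - α 0 N s) / α (-1) N s) = ((fun s => x - α 0 N s) / α (-1) N) from rfl]
        rw [deriv_div (c := fun s => x - α 0 N s) ((differentiable_const x).sub (hαdiff 0 N) t) ((hαdiff (-1) N) t) hne]
        rw [deriv_const_sub]
        rw [hPval]
        have hd2' : (d2:ℤ) - ((j:ℕ):ℤ) = 0 := by rw [hb]; ring
        rw [hd2', if_pos hb.symm]
        rw [← hαγ N t]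
        have heta : ∀ l : ℤ, (fun s => α l N s) = α l N := fun l => rfl
        simp only [heta]
        field_simp
        ring
      · have hblt : (j:ℕ) < d2 := by omega
        have hfun : (fun s => aMat d2 (fun a b => α a b s) (fun n => γ n s) N x i j)
            = fun s => (-α ((d2:ℤ)-((j:ℕ):ℤ)) N s) / α (-1) N s := by
          funext s
          simp only [aMat, Matrix.of_apply, hc', lt_irrefl, if_false, hb, if_neg hb, neg_div]
          rw [hαγ]
        rw [hfun]
        rw [show (fun s => -α ((d2:ℤ)-((j:ℕ):ℤ)) N s / α (-1) N s) = ((fun s => -α ((d2:ℤ)-((j:ℕ):ℤ)) N s) / α (-1) N) from rfl]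
        rw [deriv_div (c := fun s => -α ((d2:ℤ)-((j:ℕ):ℤ)) N s) ((hαdiff ((d2:ℤ)-((j:ℕ):ℤ)) N).neg t) ((hαdiff (-1) N) t) hne]
        rw [deriv.fun_neg]
        rw [hPval, if_neg (by omega)]
        rw [← hαγ N t]
        have heta : ∀ l : ℤ, (fun s => α l N s) = α l N := fun l => rfl
        simp only [heta]
        field_simp
        ring
    rw [hderiv]
    -- the G-sum evaluation
    have hsum : ∑ m ∈ Finset.Icc (0:ℕ) (d2+1), -(deriv (fun s => α ((d2:ℤ)-(m:ℤ)) N s) t) * Ψ m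
        = -(deriv (fun s => α ((d2:ℤ)-((j:ℕ):ℤ)) N s) t)
          + -(deriv (fun s => α ((d2:ℤ)-((d2+1:ℕ):ℤ)) N s) t) * Ψ (d2+1) := by
      have hIcc : Finset.Icc (0:ℕ) (d2+1) = Finset.range (d2+2) := by
        rw [← Finset.Ico_add_one_right_eq_Icc, Finset.range_eq_Ico]; rfl
      rw [hIcc, Finset.sum_range_succ]
      congr 1
      rw [Finset.sum_eq_single ((j:ℕ))]
      · rw [hΨ, psi_le d2 _ _ N x _ _ hbb, if_pos rfl, mul_one]
      · intro m hm hmne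
        simp only [Finset.mem_range] at hm
        rw [hΨ, psi_le d2 _ _ N x _ m (by omega), if_neg hmne, mul_zero]
      · intro hmem
        exact absurd (Finset.mem_range.mpr (by omega)) hmem
    rw [← hsum]
    -- keylemma in clean form
    have hGdef : ∀ m : ℕ, -(deriv (fun s => α ((d2:ℤ)-(m:ℤ)) N s) t)
        = ∑ k ∈ Finset.Icc (N-(d2:ℤ)) (N+(K:ℤ)+1),
            (α (N-k) N t * U (N-(d2:ℤ)+(m:ℤ)-k) k t - U (k-N) N t * α (k-N+(d2:ℤ)-(m:ℤ)) k t) := by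
      intro m
      have h := hdefQ N (N-(d2:ℤ)+(m:ℤ)) t
      have e1 : N - (N-(d2:ℤ)+(m:ℤ)) = (d2:ℤ)-(m:ℤ) := by ring
      rw [e1] at h
      rw [h, neg_neg]
      apply Finset.sum_congr rfl
      intro k _
      have e2 : k - (N-(d2:ℤ)+(m:ℤ)) = k-N+(d2:ℤ)-(m:ℤ) := by ring
      rw [e2]
    have hGzero : ∀ m : ℕ, (d2:ℤ)+1 < (m:ℤ) → -(deriv (fun s => α ((d2:ℤ)-(m:ℤ)) N s) t) = 0 := by
      intro m hm
      have hz : (fun s => α ((d2:ℤ)-(m:ℤ)) N s) = fun _ => (0:ℂ) := by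
        funext s; exact hαsupp _ _ s (Or.inl (by omega))
      rw [hz, deriv_const]
      ring
    have hkeyc : ∑ e ∈ Finset.Icc (0:ℕ) (d2+1), ∑ j' ∈ Finset.Icc (0:ℕ) K,
        (α ((d2:ℤ)-(e:ℤ)) N t * U (j':ℤ) (N-(d2:ℤ)+(e:ℤ)) t
          - U (j':ℤ) N t * α ((d2:ℤ)-(e:ℤ)) (N+(j':ℤ)) t) * Ψ (e+j')
        = ∑ m ∈ Finset.Icc (0:ℕ) (d2+1), -(deriv (fun s => α ((d2:ℤ)-(m:ℤ)) N s) t) * Ψ m := by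
      rw [hΨ]
      exact keylemma d2 K (fun a b => α a b t) (fun l n => U l n t)
        (fun m => -(deriv (fun s => α ((d2:ℤ)-m) N s) t))
        (psi d2 (fun a b => α a b t) (fun n => γ n t) N x (j:ℕ)) N
        (fun l n h => hαsupp l n t h) (fun l n h => hUsupp l n t h) hGdef hGzero
    rw [← hkeyc]
    -- algebraic expansion of the matrix side
    have hbc : (∑ e ∈ Finset.Icc (0:ℕ) (d2+1), α ((d2:ℤ)-(e:ℤ)) N t
          * ∑ j' ∈ Finset.Icc (0:ℕ) K, U (j':ℤ) (N-(d2:ℤ)+(e:ℤ)) t * Ψ (e+j'))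
        - x * ∑ j' ∈ Finset.Icc (0:ℕ) K, U ((j':ℕ):ℤ) N t * Ψ (d2+j')
        = ∑ e ∈ Finset.Icc (0:ℕ) (d2+1), ∑ j' ∈ Finset.Icc (0:ℕ) K,
          (α ((d2:ℤ)-(e:ℤ)) N t * U (j':ℤ) (N-(d2:ℤ)+(e:ℤ)) t
            - U (j':ℤ) N t * α ((d2:ℤ)-(e:ℤ)) (N+(j':ℤ)) t) * Ψ (e+j') := by
      have hx : x * ∑ j' ∈ Finset.Icc (0:ℕ) K, U ((j':ℕ):ℤ) N t * Ψ (d2+j')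
          = ∑ e ∈ Finset.Icc (0:ℕ) (d2+1), ∑ j' ∈ Finset.Icc (0:ℕ) K,
            U (j':ℤ) N t * (α ((d2:ℤ)-(e:ℤ)) (N+(j':ℤ)) t * Ψ (e+j')) := by
        rw [Finset.mul_sum]
        rw [Finset.sum_congr rfl (fun j' _ => show x * (U ((j':ℕ):ℤ) N t * Ψ (d2+j'))
            = ∑ e ∈ Finset.Icc (0:ℕ) (d2+1),
              U (j':ℤ) N t * (α ((d2:ℤ)-(e:ℤ)) (N+(j':ℤ)) t * Ψ (e+j')) from by
          rw [show x * (U ((j':ℕ):ℤ) N t * Ψ (d2+j')) = U (j':ℤ) N t * (x * Ψ (d2+j')) from by ring]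
          rw [hΨ, xpsi d2 _ _ N x _ hγt' (fun n => hαγ n t) j', Finset.mul_sum])]
        rw [Finset.sum_comm]
      rw [hx, ← Finset.sum_sub_distrib]
      apply Finset.sum_congr rfl
      intro e _
      rw [Finset.mul_sum, ← Finset.sum_sub_distrib]
      apply Finset.sum_congr rfl
      intro j' _
      ring
    rw [← hbc]
    -- final expansion of the aMat row
    have hlast : aMat d2 (fun a b => α a b t) (fun n => γ n t) N x i (Fin.last d2)
        = (x - α 0 N t) / γ N t := by
      simp [aMat, hc']
    have hcs : ∀ e : Fin d2, aMat d2 (fun a b => α a b t) (fun n => γ n t) N x i e.castSucc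
        = -α ((d2:ℤ)-((e:ℕ):ℤ)) N t / γ N t := by
      intro e
      have h5 : ¬((e:ℕ) = d2) := by omega
      simp only [aMat, Matrix.of_apply, hc', lt_irrefl, if_false, Fin.coe_castSucc, h5]
    rw [Fin.sum_univ_castSucc]
    simp only [Fin.coe_castSucc, Fin.val_last, hlast, hcs]
    -- now pure algebra with sums as atoms
    have harg0 : N - (d2:ℤ) + ((d2:ℕ):ℤ) = N := by push_cast; ring
    have harg1 : N - (d2:ℤ) + ((d2+1:ℕ):ℤ) = N + 1 := by push_cast; ring
    have hIcc : Finset.Icc (0:ℕ) (d2+1) = Finset.range (d2+2) := by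
      rw [← Finset.Ico_add_one_right_eq_Icc, Finset.range_eq_Ico]; rfl
    conv_lhs => rw [hIcc, Finset.sum_range_succ, Finset.sum_range_succ]
    have ht1 : ((d2:ℤ) - ((d2+1:ℕ):ℤ)) = -1 := by push_cast; ring
    have ht2 : ((d2:ℤ) - ((d2:ℕ):ℤ)) = 0 := by push_cast; ring
    rw [ht1, ht2, hαγ N t, harg0, harg1]
    rw [← Fin.sum_univ_eq_sum_range (fun e => α ((d2:ℤ)-(e:ℤ)) N t
        * ∑ j' ∈ Finset.Icc (0:ℕ) K, U (j':ℤ) (N-(d2:ℤ)+(e:ℤ)) t * Ψ (e+j')) d2]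
    have hpull : ∑ e : Fin d2, -α ((d2:ℤ)-((e:ℕ):ℤ)) N t / γ N t
          * ∑ j' ∈ Finset.Icc (0:ℕ) K, U (j':ℤ) (N-(d2:ℤ)+((e:ℕ):ℤ)) t * Ψ ((e:ℕ)+j')
        = -(∑ e : Fin d2, α ((d2:ℤ)-((e:ℕ):ℤ)) N t
          * ∑ j' ∈ Finset.Icc (0:ℕ) K, U (j':ℤ) (N-(d2:ℤ)+((e:ℕ):ℤ)) t * Ψ ((e:ℕ)+j')) / γ N t := by
      conv_rhs => rw [neg_div, Finset.sum_div]
      rw [← Finset.sum_neg_distrib]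
      apply Finset.sum_congr rfl
      intro e _
      ring
    rw [hpull]
    field_simp [hγ N t]
    ring
end
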